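/- arXiv:2602.07982 — 9 statements merged into one kernel-verified Lean document; each statement's English description precedes it below -/
import Mathlib

section
/- Let H_2(k_1,k_2) be the tree with root y, vertices a_1,…,a_{k_1}, b_1,…,b_{k_1}, c_1,…,c_{k_2}, and edges {a_i b_i}, {a_i y} for 1 ≤ i ≤ k_1 and {c_j y} for 1 ≤ j ≤ k_2. If m = 2k_1 + k_2 + 1 is the total number of vertices and m ≥ 4, then the number of multipackings of H_2(k_1,k_2) is at most (3/8)m² − (1/2)m + 17/8. -/
def Multipacking {V : Type*} (G : SimpleGraph V) (M : Finset V) : Prop :=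
  ∀ v : V, ∀ r : ℕ, 1 ≤ r → ({u : V | u ∈ M ∧ G.edist v u ≤ r}).ncard ≤ r

/-- Vertices of the tree `H₂(k₁,k₂)`: `none` is the root `y`, `some (inl i)` is `aᵢ`,
`some (inr (inl i))` is `bᵢ`, and `some (inr (inr j))` is `cⱼ`. -/
abbrev H2V (k₁ k₂ : ℕ) := Option (Fin k₁ ⊕ (Fin k₁ ⊕ Fin k₂))

/-- The tree `H₂(k₁,k₂)` with root `y`, edges `y aᵢ`, `aᵢ bᵢ` and `y cⱼ`. -/
def H2 (k₁ k₂ : ℕ) : SimpleGraph (H2V k₁ k₂) :=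
  SimpleGraph.fromRel (fun x y =>
    (∃ i : Fin k₁, x = none ∧ y = some (Sum.inl i)) ∨
    (∃ i : Fin k₁, x = some (Sum.inl i) ∧ y = some (Sum.inr (Sum.inl i))) ∨
    (∃ j : Fin k₂, x = none ∧ y = some (Sum.inr (Sum.inr j))))

/-! Every vertex of `H₂(k₁,k₂)` is within distance 2 of the root, so a multipacking has at most
two vertices. Two distinct members of a multipacking never share a closed neighbourhood, which
leaves only the pairs `{bᵢ, bⱼ}`, `{aᵢ, bⱼ}` (`i ≠ j`) and `{bᵢ, cⱼ}`: at most
`1 + m + 3 (k₁ choose 2) + k₁ k₂` multipackings in all, a polynomial in `k₁, k₂` that the claimed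
bound exceeds by `k₂ (3 k₂ + 4 k₁ - 6) / 8 ≥ 0` once `m ≥ 4`. -/

open Finset SimpleGraph

namespace Multipacking

variable {V : Type*} {G : SimpleGraph V} {M : Finset V}

theorem eq_of_edist_le_one (hM : Multipacking G M) {u v w : V} (hu : u ∈ M) (hv : v ∈ M)
    (hwu : G.edist w u ≤ 1) (hwv : G.edist w v ≤ 1) : u = v := by
  by_contra huv
  have hsub : ({u, v} : Set V) ⊆ {x | x ∈ M ∧ G.edist w x ≤ (1 : ℕ)} := by
    rintro x (rfl | rfl) <;> simp [*]
  have := (Set.ncard_le_ncard hsub (M.finite_toSet.subset fun x hx => hx.1)).trans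
    (hM w 1 le_rfl)
  rw [Set.ncard_pair huv] at this
  omega

theorem card_le_of_eccent_le (hM : Multipacking G M) {v : V} {r : ℕ} (hr : 1 ≤ r)
    (hv : G.eccent v ≤ r) : #M ≤ r := by
  have hset : {u | u ∈ M ∧ G.edist v u ≤ r} = (M : Set V) := by
    ext u; simpa using fun _ => G.edist_le_eccent.trans hv
  simpa [hset] using hM v r hr

end Multipacking

namespace H2

variable {k₁ k₂ : ℕ}

abbrev a (i : Fin k₁) : H2V k₁ k₂ := some (.inl i)
abbrev b (i : Fin k₁) : H2V k₁ k₂ := some (.inr (.inl i))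
abbrev c (j : Fin k₂) : H2V k₁ k₂ := some (.inr (.inr j))

lemma eccent_root_le_two : (H2 k₁ k₂).eccent none ≤ 2 := by
  refine iSup_le fun u => ?_
  rcases u with _ | i | i | j
  · simp
  · exact (edist_le_one_iff_adj_or_eq.2 (.inl (by simp [H2]))).trans one_le_two
  · have hya : (H2 k₁ k₂).Adj none (a i) := by simp [H2]
    have hab : (H2 k₁ k₂).Adj (a i) (b i) := by simp [H2]
    exact (Walk.cons hya (.cons hab .nil)).edist_le
  · exact (edist_le_one_iff_adj_or_eq.2 (.inl (by simp [H2]))).trans one_le_two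

variable (k₁ k₂) in
def pairs : Finset (Finset (H2V k₁ k₂)) :=
  (univ.powersetCard 2).image (fun s => s.image b) ∪
    univ.offDiag.image (fun p => {a p.1, b p.2}) ∪
    univ.image (fun p : Fin k₁ × Fin k₂ => {b p.1, c p.2})

lemma card_pairs_le : #(pairs k₁ k₂) ≤ 3 * k₁.choose 2 + k₁ * k₂ := by
  have hoff : #(univ : Finset (Fin k₁)).offDiag = 2 * k₁.choose 2 := by
    rw [offDiag_card, card_univ, Fintype.card_fin, ← Nat.mul_sub_one, Nat.choose_two_right,
      Nat.mul_div_cancel' (Nat.even_mul_pred_self k₁).two_dvd]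
  calc #(pairs k₁ k₂)
      ≤ #(univ.powersetCard 2 : Finset (Finset (Fin k₁))) + #(univ : Finset (Fin k₁)).offDiag +
          #(univ : Finset (Fin k₁ × Fin k₂)) := by
        grw [pairs, card_union_le, card_union_le, card_image_le, card_image_le, card_image_le]
    _ = 3 * k₁.choose 2 + k₁ * k₂ := by
        simp only [hoff, card_powersetCard, card_univ, Fintype.card_fin, Fintype.card_prod]
        ring

lemma pair_b_b_mem_pairs {i j : Fin k₁} (h : i ≠ j) : {b i, b j} ∈ pairs k₁ k₂ := by
  simp only [pairs, mem_union, mem_image]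
  exact .inl (.inl ⟨{i, j}, by simp [card_pair h], by simp [image_insert]⟩)

lemma pair_a_b_mem_pairs {i j : Fin k₁} (h : i ≠ j) : {a i, b j} ∈ pairs k₁ k₂ := by
  simp only [pairs, mem_union, mem_image]
  exact .inl (.inr ⟨(i, j), by simp [h], rfl⟩)

lemma pair_b_c_mem_pairs (i : Fin k₁) (j : Fin k₂) : {b i, c j} ∈ pairs k₁ k₂ := by
  simp only [pairs, mem_union, mem_image]
  exact .inr ⟨(i, j), by simp, rfl⟩

lemma mem_pairs_of_multipacking {M : Finset (H2V k₁ k₂)} (hM : Multipacking (H2 k₁ k₂) M)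
    (hM2 : #M = 2) : M ∈ pairs k₁ k₂ := by
  obtain ⟨u, v, huv, rfl⟩ := card_eq_two.mp hM2
  have key : ∀ w, ((H2 k₁ k₂).Adj w u ∨ w = u) → ((H2 k₁ k₂).Adj w v ∨ w = v) → False :=
    fun w hwu hwv => huv <| hM.eq_of_edist_le_one (by simp) (by simp)
      (edist_le_one_iff_adj_or_eq.2 hwu) (edist_le_one_iff_adj_or_eq.2 hwv)
  rcases u with _ | i | i | j <;> rcases v with _ | i' | i' | j'
  -- all pairs but the admissible ones have a common closed neighbour: the root or some `a i`
  all_goals first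
    | (exfalso; refine key none ?_ ?_ <;> simp [H2]; done)
    | (exfalso; refine key (a i) ?_ ?_ <;> simp [H2]; done)
    | (exfalso; refine key (a i') ?_ ?_ <;> simp [H2]; done)
    | skip
  · obtain rfl | hii := eq_or_ne i i'
    · exact (key (a i) (by simp) (by simp [H2])).elim
    · exact pair_a_b_mem_pairs hii
  · obtain rfl | hii := eq_or_ne i' i
    · exact (key (a i') (by simp [H2]) (by simp)).elim
    · rw [pair_comm]; exact pair_a_b_mem_pairs hii
  · exact pair_b_b_mem_pairs (by simpa using huv)
  · exact pair_b_c_mem_pairs i j'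
  · rw [pair_comm]; exact pair_b_c_mem_pairs i' j

lemma card_multipackings_le : Nat.card {M // Multipacking (H2 k₁ k₂) M} ≤
    1 + (2 * k₁ + k₂ + 1) + (3 * k₁.choose 2 + k₁ * k₂) := by
  let S := univ.powersetCard 0 ∪ univ.powersetCard 1 ∪ pairs k₁ k₂
  have hS : ∀ M, Multipacking (H2 k₁ k₂) M → M ∈ S := by
    intro M hM
    have h := hM.card_le_of_eccent_le one_le_two (by exact_mod_cast eccent_root_le_two)
    interval_cases hM2 : #M
    · exact mem_union_left _ (mem_union_left _ (mem_powersetCard.2 ⟨subset_univ M, hM2⟩))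
    · exact mem_union_left _ (mem_union_right _ (mem_powersetCard.2 ⟨subset_univ M, hM2⟩))
    · exact mem_union_right _ (mem_pairs_of_multipacking hM hM2)
  calc Nat.card {M // Multipacking (H2 k₁ k₂) M}
      ≤ #S := (Nat.card_le_card_of_injective (fun M => (⟨M.1, hS M.1 M.2⟩ : S))
          fun M N h => Subtype.ext (by simpa using h)).trans_eq (Nat.card_eq_finsetCard S)
    _ ≤ _ := by
        grw [card_union_le, card_union_le, card_pairs_le]
        simp only [card_powersetCard, Nat.choose_zero_right, Nat.choose_one_right, card_univ,
          Fintype.card_option, Fintype.card_sum, Fintype.card_fin]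
        omega

end H2

/-- If `m = 2k₁ + k₂ + 1 ≥ 4` is the number of vertices of `H₂(k₁,k₂)`, then the number of
multipackings of `H₂(k₁,k₂)` is at most `(3/8)m² − (1/2)m + 17/8`. -/
theorem card_multipackings_H2_le (k₁ k₂ m : ℕ) (hm : m = 2 * k₁ + k₂ + 1) (hm4 : 4 ≤ m) :
    (Nat.card {M : Finset (H2V k₁ k₂) // Multipacking (H2 k₁ k₂) M} : ℚ) ≤
      3 / 8 * m ^ 2 - 1 / 2 * m + 17 / 8 := by
  subst hm
  have hk : (6 : ℚ) ≤ 3 * k₂ + 4 * k₁ := by exact_mod_cast (by omega : 6 ≤ 3 * k₂ + 4 * k₁)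
  have hslack : 0 ≤ (k₂ : ℚ) * (3 * k₂ + 4 * k₁ - 6) := mul_nonneg k₂.cast_nonneg (by linarith)
  refine (Nat.cast_le.2 H2.card_multipackings_le).trans ?_
  push_cast [Nat.cast_choose_two]
  linarith
end

section
/- In the tree H_2(k_1,k_2) (root y adjacent to a_1,…,a_{k_1} and c_1,…,c_{k_2}, each a_i additionally adjacent to a leaf b_i), the multipackings of size exactly 2 are exactly the sets of the following three forms: {b_i, c_j} for any i, j; {b_i, b_j} for i ≠ j; and {a_i, b_j} for i ≠ j. Hence the number of multipackings of size 2 equals k_1·k_2 + C(k_1,2) + k_1(k_1 − 1). -/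
section Helpers
variable {k₁ k₂ : ℕ}

lemma edist_le_one_iff' {V : Type*} (G : SimpleGraph V) (u v : V) :
    G.edist u v ≤ 1 ↔ u = v ∨ G.Adj u v := by
  constructor
  · intro h
    rcases eq_or_ne (G.edist u v) 0 with h0 | h0
    · exact Or.inl (SimpleGraph.edist_eq_zero_iff.mp h0)
    · exact Or.inr (SimpleGraph.edist_eq_one_iff_adj.mp
        (le_antisymm h (ENat.one_le_iff_ne_zero.mpr h0)))
  · rintro (rfl | h)
    · simp [SimpleGraph.edist_self]
    · exact le_of_eq (SimpleGraph.edist_eq_one_iff_adj.mpr h)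

lemma not_close' {V : Type*} {G : SimpleGraph V} {M : Finset V} (hM : Multipacking G M)
    {u w : V} (hu : u ∈ M) (hw : w ∈ M) (huw : u ≠ w) (v : V)
    (h1 : v = u ∨ G.Adj v u) (h2 : v = w ∨ G.Adj v w) : False := by
  have h1' : G.edist v u ≤ 1 := (edist_le_one_iff' _ _ _).mpr h1
  have h2' : G.edist v w ≤ 1 := (edist_le_one_iff' _ _ _).mpr h2
  have hcon := hM v 1 le_rfl
  simp only [Nat.cast_one] at hcon
  have hsub : ({u, w} : Set V) ⊆ {x | x ∈ M ∧ G.edist v x ≤ 1} := by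
    intro x hx
    rcases hx with rfl | hx
    · exact ⟨hu, h1'⟩
    · rcases hx with rfl
      exact ⟨hw, h2'⟩
  have hfin : ({x | x ∈ M ∧ G.edist v x ≤ 1}).Finite :=
    M.finite_toSet.subset fun x hx => hx.1
  have hle := Set.ncard_le_ncard hsub hfin
  rw [Set.ncard_pair huw] at hle
  omega

lemma multipacking_of_pair' {V : Type*} [DecidableEq V] (G : SimpleGraph V) (u₁ u₂ : V)
    (hne : u₁ ≠ u₂)
    (hsep : ∀ v, (v = u₁ ∨ G.Adj v u₁) → (v = u₂ ∨ G.Adj v u₂) → False) :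
    Multipacking G {u₁, u₂} := by
  intro v r hr
  set S := {x | x ∈ ({u₁, u₂} : Finset V) ∧ G.edist v x ≤ r} with hS
  have hsub : S ⊆ ({u₁, u₂} : Set V) := by
    intro x hx; simpa using hx.1
  rcases eq_or_lt_of_le hr with h1 | h2
  · subst h1
    have hnotboth : ¬ (u₁ ∈ S ∧ u₂ ∈ S) := by
      rintro ⟨hx, hy⟩
      exact hsep v ((edist_le_one_iff' _ _ _).mp (by exact_mod_cast hx.2))
        ((edist_le_one_iff' _ _ _).mp (by exact_mod_cast hy.2))
    by_cases hu1 : u₁ ∈ S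
    · have hss : S ⊆ {u₁} := by
        intro x hx
        rcases hsub hx with rfl | hx'
        · rfl
        · rcases hx' with rfl
          exact absurd ⟨hu1, hx⟩ hnotboth
      simpa using Set.ncard_le_ncard hss (Set.finite_singleton _)
    · have hss : S ⊆ {u₂} := by
        intro x hx
        rcases hsub hx with rfl | hx'
        · exact absurd hx hu1
        · rcases hx' with rfl
          rfl
      simpa using Set.ncard_le_ncard hss (Set.finite_singleton _)
  · have hle := Set.ncard_le_ncard hsub ((Set.finite_singleton u₂).insert u₁)
    have h2' : ({u₁, u₂} : Set V).ncard = 2 := Set.ncard_pair hne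
    omega

lemma adj_ya (i : Fin k₁) : (H2 k₁ k₂).Adj none (some (Sum.inl i)) := by simp [H2]
lemma adj_ab (i : Fin k₁) :
    (H2 k₁ k₂).Adj (some (Sum.inl i)) (some (Sum.inr (Sum.inl i))) := by simp [H2]
lemma adj_yc (j : Fin k₂) : (H2 k₁ k₂).Adj none (some (Sum.inr (Sum.inr j))) := by simp [H2]

lemma adj_b {v : H2V k₁ k₂} {i : Fin k₁} (h : (H2 k₁ k₂).Adj v (some (Sum.inr (Sum.inl i)))) :
    v = some (Sum.inl i) := by simp [H2] at h; tauto
lemma adj_c {v : H2V k₁ k₂} {j : Fin k₂} (h : (H2 k₁ k₂).Adj v (some (Sum.inr (Sum.inr j)))) :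
    v = none := by simp [H2] at h; tauto
lemma adj_a {v : H2V k₁ k₂} {i : Fin k₁} (h : (H2 k₁ k₂).Adj v (some (Sum.inl i))) :
    v = none ∨ v = some (Sum.inr (Sum.inl i)) := by simp [H2] at h; tauto

lemma sep_bc (i : Fin k₁) (j : Fin k₂) : ∀ v : H2V k₁ k₂,
    (v = some (Sum.inr (Sum.inl i)) ∨ (H2 k₁ k₂).Adj v (some (Sum.inr (Sum.inl i)))) →
    (v = some (Sum.inr (Sum.inr j)) ∨ (H2 k₁ k₂).Adj v (some (Sum.inr (Sum.inr j)))) → False := by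
  intro v h1 h2
  have hv1 := h1.imp_right adj_b
  have hv2 := h2.imp_right adj_c
  rcases hv1 with rfl | rfl <;> rcases hv2 with h | h <;> simp_all

lemma sep_bb {i j : Fin k₁} (hij : i ≠ j) : ∀ v : H2V k₁ k₂,
    (v = some (Sum.inr (Sum.inl i)) ∨ (H2 k₁ k₂).Adj v (some (Sum.inr (Sum.inl i)))) →
    (v = some (Sum.inr (Sum.inl j)) ∨ (H2 k₁ k₂).Adj v (some (Sum.inr (Sum.inl j)))) → False := by
  intro v h1 h2
  have hv1 := h1.imp_right adj_b
  have hv2 := h2.imp_right adj_b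
  rcases hv1 with rfl | rfl <;> rcases hv2 with h | h <;> simp_all

lemma sep_ab {i j : Fin k₁} (hij : i ≠ j) : ∀ v : H2V k₁ k₂,
    (v = some (Sum.inl i) ∨ (H2 k₁ k₂).Adj v (some (Sum.inl i))) →
    (v = some (Sum.inr (Sum.inl j)) ∨ (H2 k₁ k₂).Adj v (some (Sum.inr (Sum.inl j)))) → False := by
  intro v h1 h2
  have hv1 : v = some (Sum.inl i) ∨ v = none ∨ v = some (Sum.inr (Sum.inl i)) :=
    h1.imp_right adj_a
  have hv2 := h2.imp_right adj_b
  rcases hv1 with rfl | rfl | rfl <;> rcases hv2 with h | h <;> simp_all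

lemma H2_char (M : Finset (H2V k₁ k₂)) :
    (Multipacking (H2 k₁ k₂) M ∧ M.card = 2) ↔
      ((∃ i : Fin k₁, ∃ j : Fin k₂,
          M = {some (Sum.inr (Sum.inl i)), some (Sum.inr (Sum.inr j))}) ∨
       (∃ i j : Fin k₁, i ≠ j ∧
          M = {some (Sum.inr (Sum.inl i)), some (Sum.inr (Sum.inl j))}) ∨
       (∃ i j : Fin k₁, i ≠ j ∧
          M = {some (Sum.inl i), some (Sum.inr (Sum.inl j))})) := by
  constructor
  · rintro ⟨hmp, hcard⟩
    obtain ⟨u, w, huw, rfl⟩ := Finset.card_eq_two.mp hcard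
    have hu : u ∈ ({u, w} : Finset (H2V k₁ k₂)) := by simp
    have hw : w ∈ ({u, w} : Finset (H2V k₁ k₂)) := by simp
    rcases u with _ | (ia | ib | jc) <;> rcases w with _ | (ia' | ib' | jc')
    · exact absurd rfl huw
    · exact (not_close' hmp hu hw huw none (Or.inl rfl) (Or.inr (adj_ya ia'))).elim
    · exact (not_close' hmp hu hw huw (some (Sum.inl ib'))
        (Or.inr (adj_ya ib').symm) (Or.inr (adj_ab ib'))).elim
    · exact (not_close' hmp hu hw huw none (Or.inl rfl) (Or.inr (adj_yc jc'))).elim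
    · exact (not_close' hmp hu hw huw none (Or.inr (adj_ya ia)) (Or.inl rfl)).elim
    · exact (not_close' hmp hu hw huw none
        (Or.inr (adj_ya ia)) (Or.inr (adj_ya ia'))).elim
    · by_cases h : ia = ib'
      · subst h
        exact (not_close' hmp hu hw huw (some (Sum.inl ia))
          (Or.inl rfl) (Or.inr (adj_ab ia))).elim
      · exact Or.inr (Or.inr ⟨ia, ib', h, rfl⟩)
    · exact (not_close' hmp hu hw huw none
        (Or.inr (adj_ya ia)) (Or.inr (adj_yc jc'))).elim
    · exact (not_close' hmp hu hw huw (some (Sum.inl ib))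
        (Or.inr (adj_ab ib)) (Or.inr (adj_ya ib).symm)).elim
    · by_cases h : ia' = ib
      · subst h
        exact (not_close' hmp hu hw huw (some (Sum.inl ia'))
          (Or.inr (adj_ab ia')) (Or.inl rfl)).elim
      · exact Or.inr (Or.inr ⟨ia', ib, h, Finset.pair_comm _ _⟩)
    · have hne : ib ≠ ib' := fun h => huw (by rw [h])
      exact Or.inr (Or.inl ⟨ib, ib', hne, rfl⟩)
    · exact Or.inl ⟨ib, jc', rfl⟩
    · exact (not_close' hmp hu hw huw none (Or.inr (adj_yc jc)) (Or.inl rfl)).elim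
    · exact (not_close' hmp hu hw huw none
        (Or.inr (adj_yc jc)) (Or.inr (adj_ya ia'))).elim
    · exact Or.inl ⟨ib', jc, Finset.pair_comm _ _⟩
    · exact (not_close' hmp hu hw huw none
        (Or.inr (adj_yc jc)) (Or.inr (adj_yc jc'))).elim
  · rintro (⟨i, j, rfl⟩ | ⟨i, j, hij, rfl⟩ | ⟨i, j, hij, rfl⟩)
    · refine ⟨multipacking_of_pair' _ _ _ (by simp) (sep_bc i j), Finset.card_pair (by simp)⟩
    · refine ⟨multipacking_of_pair' _ _ _ (by simpa using hij) (sep_bb hij),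
        Finset.card_pair (by simpa using hij)⟩
    · refine ⟨multipacking_of_pair' _ _ _ (by simp) (sep_ab hij), Finset.card_pair (by simp)⟩

end Helpers


def bp (k₂ : ℕ) {k₁ : ℕ} : Sym2 (Fin k₁) → Finset (H2V k₁ k₂) :=
  Sym2.lift ⟨fun i j => {some (Sum.inr (Sum.inl i)), some (Sum.inr (Sum.inl j))},
    fun i j => Finset.pair_comm _ _⟩

lemma bp_mk {k₁ k₂ : ℕ} (i j : Fin k₁) :
    bp k₂ s(i, j) = ({some (Sum.inr (Sum.inl i)), some (Sum.inr (Sum.inl j))} :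
      Finset (H2V k₁ k₂)) := rfl

lemma fpair {α : Type*} [DecidableEq α] {a b c d : α} :
    ({a, b} : Finset α) = {c, d} ↔ (a = c ∧ b = d) ∨ (a = d ∧ b = c) := by
  rw [← Finset.coe_inj]
  simp only [Finset.coe_insert, Finset.coe_singleton]
  exact Set.pair_eq_pair_iff

example (k₁ : ℕ) : k₁ * k₁ - k₁ = k₁ * (k₁ - 1) := by rw [Nat.mul_sub, Nat.mul_one]


open Finset

lemma H2_count (k₁ k₂ : ℕ) :
    Nat.card {M : Finset (H2V k₁ k₂) // Multipacking (H2 k₁ k₂) M ∧ M.card = 2} =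
      k₁ * k₂ + k₁.choose 2 + k₁ * (k₁ - 1) := by
  classical
  set f₁ : Fin k₁ × Fin k₂ → Finset (H2V k₁ k₂) :=
    fun p => {some (Sum.inr (Sum.inl p.1)), some (Sum.inr (Sum.inr p.2))} with hf₁
  set f₃ : Fin k₁ × Fin k₁ → Finset (H2V k₁ k₂) :=
    fun p => {some (Sum.inl p.1), some (Sum.inr (Sum.inl p.2))} with hf₃
  set S₁ : Finset (Finset (H2V k₁ k₂)) := univ.image f₁ with hS₁
  set S₂ : Finset (Finset (H2V k₁ k₂)) :=
    ((univ : Finset (Sym2 (Fin k₁))).filter (fun z => ¬ z.IsDiag)).image (bp k₂) with hS₂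
  set S₃ : Finset (Finset (H2V k₁ k₂)) := (univ.offDiag).image f₃ with hS₃
  have hset : {M : Finset (H2V k₁ k₂) | Multipacking (H2 k₁ k₂) M ∧ M.card = 2} =
      ↑(S₁ ∪ S₂ ∪ S₃) := by
    ext M
    rw [Set.mem_setOf_eq, H2_char M, Finset.coe_union, Finset.coe_union]
    simp only [Set.mem_union, Finset.mem_coe]
    constructor
    · rintro (⟨i, j, rfl⟩ | ⟨i, j, hij, rfl⟩ | ⟨i, j, hij, rfl⟩)
      · exact Or.inl (Or.inl (mem_image.mpr ⟨(i, j), mem_univ _, rfl⟩))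
      · exact Or.inl (Or.inr (mem_image.mpr ⟨s(i, j),
          mem_filter.mpr ⟨mem_univ _, by simpa using hij⟩, rfl⟩))
      · exact Or.inr (mem_image.mpr ⟨(i, j), mem_offDiag.mpr ⟨mem_univ _, mem_univ _, hij⟩, rfl⟩)
    · rintro ((h | h) | h)
      · obtain ⟨p, -, rfl⟩ := mem_image.mp h
        exact Or.inl ⟨p.1, p.2, rfl⟩
      · obtain ⟨z, hz, rfl⟩ := mem_image.mp h
        induction z using Sym2.ind with
        | _ i j =>
          exact Or.inr (Or.inl ⟨i, j, by simpa using (mem_filter.mp hz).2, rfl⟩)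
      · obtain ⟨p, hp, rfl⟩ := mem_image.mp h
        exact Or.inr (Or.inr ⟨p.1, p.2, (mem_offDiag.mp hp).2.2, rfl⟩)
  have hnat : Nat.card {M : Finset (H2V k₁ k₂) // Multipacking (H2 k₁ k₂) M ∧ M.card = 2} =
      (S₁ ∪ S₂ ∪ S₃).card := by
    calc Nat.card {M : Finset (H2V k₁ k₂) // Multipacking (H2 k₁ k₂) M ∧ M.card = 2}
        = ({M : Finset (H2V k₁ k₂) | Multipacking (H2 k₁ k₂) M ∧ M.card = 2}).ncard :=
          Nat.card_coe_set_eq _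
      _ = ((S₁ ∪ S₂ ∪ S₃ : Finset (Finset (H2V k₁ k₂))) : Set (Finset (H2V k₁ k₂))).ncard := by
          rw [hset]
      _ = (S₁ ∪ S₂ ∪ S₃).card := Set.ncard_coe_finset _
  have hd12 : Disjoint S₁ S₂ := by
    rw [Finset.disjoint_left]
    rintro M hM1 hM2
    obtain ⟨p, -, rfl⟩ := mem_image.mp hM1
    obtain ⟨z, -, hEq⟩ := mem_image.mp hM2
    induction z using Sym2.ind with
    | _ i j =>
      rw [bp_mk] at hEq
      rcases fpair.mp hEq with ⟨h1, h2⟩ | ⟨h1, h2⟩ <;> simp [hf₁] at h1 h2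
  have hd13 : Disjoint S₁ S₃ := by
    rw [Finset.disjoint_left]
    rintro M hM1 hM3
    obtain ⟨p, -, rfl⟩ := mem_image.mp hM1
    obtain ⟨q, -, hEq⟩ := mem_image.mp hM3
    rcases fpair.mp hEq.symm with ⟨h1, h2⟩ | ⟨h1, h2⟩ <;> simp [hf₁, hf₃] at h1 h2
  have hd23 : Disjoint S₂ S₃ := by
    rw [Finset.disjoint_left]
    rintro M hM2 hM3
    obtain ⟨z, -, rfl⟩ := mem_image.mp hM2
    obtain ⟨q, -, hEq⟩ := mem_image.mp hM3
    induction z using Sym2.ind with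
    | _ i j =>
      rw [bp_mk] at hEq
      rcases fpair.mp hEq.symm with ⟨h1, h2⟩ | ⟨h1, h2⟩ <;> simp [hf₃] at h1 h2
  have hc1 : S₁.card = k₁ * k₂ := by
    rw [hS₁, Finset.card_image_of_injective _ ?_, card_univ, Fintype.card_prod,
      Fintype.card_fin, Fintype.card_fin]
    intro p q h
    rcases fpair.mp h with ⟨h1, h2⟩ | ⟨h1, h2⟩ <;> simp [hf₁] at h1 h2
    exact Prod.ext h1 h2
  have hc2 : S₂.card = k₁.choose 2 := by
    rw [hS₂, Finset.card_image_of_injOn ?_, ← Fintype.card_subtype,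
      Sym2.card_subtype_not_diag, Fintype.card_fin]
    intro z hz z' hz' h
    induction z using Sym2.ind with
    | _ i j =>
      induction z' using Sym2.ind with
      | _ i' j' =>
        rw [bp_mk, bp_mk] at h
        rcases fpair.mp h with ⟨h1, h2⟩ | ⟨h1, h2⟩ <;> simp at h1 h2
        · exact Sym2.eq_iff.mpr (Or.inl ⟨h1, h2⟩)
        · exact Sym2.eq_iff.mpr (Or.inr ⟨h1, h2⟩)
  have hc3 : S₃.card = k₁ * (k₁ - 1) := by
    rw [hS₃, Finset.card_image_of_injOn ?_, Finset.offDiag_card, card_univ, Fintype.card_fin,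
      Nat.mul_sub, Nat.mul_one]
    intro p hp q hq h
    rcases fpair.mp h with ⟨h1, h2⟩ | ⟨h1, h2⟩ <;> simp [hf₃] at h1 h2
    exact Prod.ext h1 h2
  rw [hnat, card_union_of_disjoint (by
      rw [Finset.disjoint_union_left]; exact ⟨hd13, hd23⟩),
    card_union_of_disjoint hd12, hc1, hc2, hc3]

/-- The multipackings of size `2` of `H₂(k₁,k₂)` are exactly the pairs `{bᵢ, cⱼ}`,
the pairs `{bᵢ, bⱼ}` with `i ≠ j`, and the pairs `{aᵢ, bⱼ}` with `i ≠ j`; consequently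
their number is `k₁·k₂ + C(k₁,2) + k₁·(k₁ − 1)`. -/
theorem multipackings_H2_card_two (k₁ k₂ : ℕ) :
    (∀ M : Finset (H2V k₁ k₂),
      (Multipacking (H2 k₁ k₂) M ∧ M.card = 2) ↔
        ((∃ i : Fin k₁, ∃ j : Fin k₂,
            M = {some (Sum.inr (Sum.inl i)), some (Sum.inr (Sum.inr j))}) ∨
         (∃ i j : Fin k₁, i ≠ j ∧
            M = {some (Sum.inr (Sum.inl i)), some (Sum.inr (Sum.inl j))}) ∨
         (∃ i j : Fin k₁, i ≠ j ∧
            M = {some (Sum.inl i), some (Sum.inr (Sum.inl j))}))) ∧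
    Nat.card {M : Finset (H2V k₁ k₂) // Multipacking (H2 k₁ k₂) M ∧ M.card = 2} =
      k₁ * k₂ + k₁.choose 2 + k₁ * (k₁ - 1) := by
  exact ⟨fun M => H2_char M, H2_count k₁ k₂⟩
end

section
/- Let f(n) denote the number of multipackings of the path P_n on n vertices. Then f satisfies the recurrence f(n) = f(n−1) + f(n−3) for n ≥ 4, with initial values f(1) = 2, f(2) = 3, f(3) = 4. -/
/-- The number of multipackings of the path `Pₙ` on `n` vertices. -/
noncomputable def pathMultipackingCount (n : ℕ) : ℕ :=
  Nat.card {M : Finset (Fin n) // Multipacking (SimpleGraph.pathGraph n) M}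

open Finset

/-- Any walk in the path graph has length at least the distance of endpoints. -/
lemma pathGraph_walk_length {n : ℕ} {u v : Fin n} (p : (SimpleGraph.pathGraph n).Walk u v) :
    Nat.dist u.val v.val ≤ p.length := by
  induction p with
  | nil => simp [Nat.dist_self]
  | @cons a b c h q ih =>
    have hd : Nat.dist a.val b.val = 1 := by
      rcases SimpleGraph.pathGraph_adj.mp h with h1 | h1 <;> simp [Nat.dist] <;> omega
    calc Nat.dist a.val c.val ≤ Nat.dist a.val b.val + Nat.dist b.val c.val :=
          Nat.dist.triangle_inequality _ _ _
      _ ≤ 1 + q.length := by rw [hd]; omega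
      _ = (SimpleGraph.Walk.cons h q).length := by simp [SimpleGraph.Walk.length_cons]; omega

lemma pathGraph_exists_walk {n : ℕ} (u v : Fin n) (huv : u.val ≤ v.val) :
    ∃ p : (SimpleGraph.pathGraph n).Walk u v, p.length = v.val - u.val := by
  obtain ⟨k, hk⟩ : ∃ k, v.val - u.val = k := ⟨_, rfl⟩
  induction k generalizing u with
  | zero =>
    have : u = v := Fin.ext (by omega)
    subst this
    exact ⟨SimpleGraph.Walk.nil, by simp⟩
  | succ k ih =>
    have hlt : u.val + 1 < n := by have := v.isLt; omega
    set u' : Fin n := ⟨u.val + 1, hlt⟩ with hu'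
    have hadj : (SimpleGraph.pathGraph n).Adj u u' :=
      SimpleGraph.pathGraph_adj.mpr (Or.inl rfl)
    obtain ⟨q, hq⟩ := ih u' (by simp [hu']; omega) (by simp [hu']; omega)
    exact ⟨SimpleGraph.Walk.cons hadj q, by simp [hq, hu']; omega⟩

lemma pathGraph_edist {n : ℕ} (u v : Fin n) :
    (SimpleGraph.pathGraph n).edist u v = Nat.dist u.val v.val := by
  obtain ⟨p, hp⟩ : ∃ p : (SimpleGraph.pathGraph n).Walk u v,
      p.length = Nat.dist u.val v.val := by
    rcases le_total u.val v.val with h | h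
    · obtain ⟨p, hp⟩ := pathGraph_exists_walk u v h
      exact ⟨p, by rw [hp, Nat.dist_eq_sub_of_le h]⟩
    · obtain ⟨p, hp⟩ := pathGraph_exists_walk v u h
      exact ⟨p.reverse, by rw [SimpleGraph.Walk.length_reverse, hp,
        Nat.dist_eq_sub_of_le_right h]⟩
  apply le_antisymm
  · simpa [hp] using SimpleGraph.edist_le p
  · have hlt : (SimpleGraph.pathGraph n).edist u v < ⊤ :=
      lt_of_le_of_lt (SimpleGraph.edist_le p) (WithTop.coe_lt_top _)
    have hne : (SimpleGraph.pathGraph n).edist u v ≠ ⊤ := hlt.ne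
    obtain ⟨q, hq⟩ := SimpleGraph.exists_walk_of_edist_ne_top hne
    rw [← hq]
    exact_mod_cast pathGraph_walk_length q

lemma nat_dist_def (a b : ℕ) : Nat.dist a b = (a - b) + (b - a) := rfl

/-- Decidable multipacking predicate for subsets of `{0, …, n-1}` of the path on `ℕ`. -/
def MP (n : ℕ) (M : Finset ℕ) : Prop :=
  M ⊆ Finset.range n ∧
    ∀ v < n, ∀ r ≤ n, 1 ≤ r → (M.filter fun u => Nat.dist v u ≤ r).card ≤ r

instance MP.decidable (n : ℕ) : DecidablePred (MP n) := fun _ => by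
  unfold MP; infer_instance

lemma MP_all {n : ℕ} {M : Finset ℕ} (h : MP n M) (v r : ℕ) (hr : 1 ≤ r) :
    (M.filter fun u => Nat.dist v u ≤ r).card ≤ r := by
  obtain ⟨hsub, h⟩ := h
  rcases le_or_gt n r with hnr | hnr
  · calc (M.filter fun u => Nat.dist v u ≤ r).card ≤ M.card := Finset.card_filter_le _ _
      _ ≤ (Finset.range n).card := Finset.card_le_card hsub
      _ = n := Finset.card_range n
      _ ≤ r := hnr
  · have hss : (M.filter fun u => Nat.dist v u ≤ r) ⊆
        (M.filter fun u => Nat.dist (min v (n-1)) u ≤ r) := by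
      intro u hu
      simp only [Finset.mem_filter] at hu ⊢
      have hun : u < n := Finset.mem_range.mp (hsub hu.1)
      refine ⟨hu.1, ?_⟩
      have := hu.2
      simp only [nat_dist_def] at this ⊢
      omega
    exact le_trans (Finset.card_le_card hss) (h _ (by omega) r (by omega) hr)

lemma MP_iff {n : ℕ} {M : Finset ℕ} :
    MP n M ↔ M ⊆ Finset.range n ∧
      ∀ v r : ℕ, 1 ≤ r → (M.filter fun u => Nat.dist v u ≤ r).card ≤ r := by
  constructor
  · exact fun h => ⟨h.1, fun v r hr => MP_all h v r hr⟩
  · exact fun h => ⟨h.1, fun v _ r _ hr => h.2 v r hr⟩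

def F (n : ℕ) : Finset (Finset ℕ) := (Finset.range n).powerset.filter (MP n)

lemma mem_F {n : ℕ} {M : Finset ℕ} : M ∈ F n ↔ MP n M := by
  simp only [F, Finset.mem_filter, Finset.mem_powerset]
  exact ⟨fun h => h.2, fun h => ⟨h.1, h⟩⟩

open Classical in
lemma multipacking_iff {n : ℕ} (M : Finset (Fin n)) :
    Multipacking (SimpleGraph.pathGraph n) M ↔ MP n (M.map Fin.valEmbedding) := by
  have hset : ∀ (v : Fin n) (r : ℕ),
      ({u : Fin n | u ∈ M ∧ (SimpleGraph.pathGraph n).edist v u ≤ r}).ncard =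
        ((M.map Fin.valEmbedding).filter fun u => Nat.dist v.val u ≤ r).card := by
    intro v r
    rw [Finset.filter_map, Finset.card_map]
    have : {u : Fin n | u ∈ M ∧ (SimpleGraph.pathGraph n).edist v u ≤ r} =
        ↑(M.filter fun u => Nat.dist v.val u.val ≤ r) := by
      ext u
      simp only [Set.mem_setOf_eq, Finset.coe_filter, pathGraph_edist, Set.mem_setOf_eq,
        Finset.mem_filter]
      constructor
      · rintro ⟨h1, h2⟩; exact ⟨h1, by exact_mod_cast h2⟩
      · rintro ⟨h1, h2⟩; exact ⟨h1, by exact_mod_cast h2⟩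
    rw [this, Set.ncard_coe_finset]
    congr 1
  constructor
  · intro h
    rw [MP_iff]
    refine ⟨?_, fun v r hr => ?_⟩
    · intro u hu
      simp only [Finset.mem_map, Fin.valEmbedding_apply] at hu
      obtain ⟨a, _, rfl⟩ := hu
      exact Finset.mem_range.mpr a.isLt
    · rcases Nat.lt_or_ge v n with hv | hv
      · rw [← hset ⟨v, hv⟩ r]; exact h ⟨v, hv⟩ r hr
      · rcases Nat.eq_zero_or_pos n with rfl | hn
        · simp [Finset.eq_empty_of_forall_notMem]
        · have hss : ((M.map Fin.valEmbedding).filter fun u => Nat.dist v u ≤ r) ⊆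
              ((M.map Fin.valEmbedding).filter fun u => Nat.dist (n-1) u ≤ r) := by
            intro u hu
            simp only [Finset.mem_filter, Finset.mem_map, Fin.valEmbedding_apply] at hu ⊢
            obtain ⟨⟨a, ha, rfl⟩, h2⟩ := hu
            refine ⟨⟨a, ha, rfl⟩, ?_⟩
            have := a.isLt
            simp only [nat_dist_def] at h2 ⊢
            omega
          refine le_trans (Finset.card_le_card hss) ?_
          rw [← hset ⟨n-1, by omega⟩ r]
          exact h ⟨n-1, by omega⟩ r hr
  · intro h v r hr
    rw [hset v r]
    exact MP_all h v.val r hr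

lemma attachFin_map {n : ℕ} (N : Finset ℕ) (h : ∀ m ∈ N, m < n) :
    (N.attachFin h).map Fin.valEmbedding = N := by
  ext a
  simp only [Finset.mem_map, Finset.mem_attachFin, Fin.valEmbedding_apply]
  constructor
  · rintro ⟨b, hb, rfl⟩; exact hb
  · intro ha; exact ⟨⟨a, h a ha⟩, ha, rfl⟩

lemma count_eq (n : ℕ) : pathMultipackingCount n = (F n).card := by
  have e : {M : Finset (Fin n) // Multipacking (SimpleGraph.pathGraph n) M} ≃
      {N : Finset ℕ // N ∈ F n} :=
    { toFun := fun M => ⟨M.1.map Fin.valEmbedding,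
        mem_F.mpr ((multipacking_iff M.1).mp M.2)⟩
      invFun := fun N => by
        refine ⟨(N.1).attachFin (fun m hm => ?_), ?_⟩
        · exact Finset.mem_range.mp ((mem_F.mp N.2).1 hm)
        · rw [multipacking_iff, attachFin_map]
          exact mem_F.mp N.2
      left_inv := fun M => by
        ext a
        simp [Finset.mem_attachFin, Fin.val_inj]
      right_inv := fun N => by
        ext a
        simp [Finset.mem_attachFin, attachFin_map] }
  rw [pathMultipackingCount, Nat.card_congr e, Nat.card_eq_fintype_card,
    Fintype.card_coe]

lemma F_notMem {n : ℕ} (hn : 1 ≤ n) :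
    (F n).filter (fun M => (n-1) ∉ M) = F (n-1) := by
  ext M
  simp only [Finset.mem_filter, mem_F]
  constructor
  · rintro ⟨hM, hnm⟩
    rw [MP_iff] at hM ⊢
    refine ⟨?_, hM.2⟩
    intro u hu
    have h1 := Finset.mem_range.mp (hM.1 hu)
    have h2 : u ≠ n-1 := fun h => hnm (h ▸ hu)
    exact Finset.mem_range.mpr (by omega)
  · intro hM
    rw [MP_iff] at hM
    have hsub := hM.1
    refine ⟨MP_iff.mpr ⟨fun u hu => Finset.mem_range.mpr
      (by have := Finset.mem_range.mp (hsub hu); omega), hM.2⟩,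
      fun h => by have := Finset.mem_range.mp (hsub h); omega⟩

lemma F_mem_card {n : ℕ} (hn : 4 ≤ n) :
    ((F n).filter (fun M => (n-1) ∈ M)).card = (F (n-3)).card := by
  apply Finset.card_bij (fun M _ => M.erase (n-1))
  · intro M hM
    simp only [Finset.mem_filter, mem_F] at hM
    obtain ⟨hMP, hmem⟩ := hM
    have hall := (MP_iff.mp hMP).2
    have hsub := (MP_iff.mp hMP).1
    have key : ∀ u ∈ M, u ≠ n-1 → u < n-3 := by
      intro u hu hne
      by_contra hge
      push_neg at hge
      have hun : u < n := Finset.mem_range.mp (hsub hu)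
      have hpair : ({u, n-1} : Finset ℕ) ⊆ M.filter (fun w => Nat.dist (n-2) w ≤ 1) := by
        intro w hw
        simp only [Finset.mem_insert, Finset.mem_singleton] at hw
        rcases hw with rfl | rfl
        · exact Finset.mem_filter.mpr ⟨hu, by simp only [nat_dist_def]; omega⟩
        · exact Finset.mem_filter.mpr ⟨hmem, by simp only [nat_dist_def]; omega⟩
      have h2 : 2 ≤ (M.filter (fun w => Nat.dist (n-2) w ≤ 1)).card := by
        calc 2 = ({u, n-1} : Finset ℕ).card := by
              rw [Finset.card_insert_of_notMem (by simp; omega), Finset.card_singleton]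
          _ ≤ _ := Finset.card_le_card hpair
      have := hall (n-2) 1 le_rfl
      omega
    rw [mem_F, MP_iff]
    constructor
    · intro u hu
      rw [Finset.mem_erase] at hu
      exact Finset.mem_range.mpr (key u hu.2 hu.1)
    · intro v r hr
      refine le_trans (Finset.card_le_card ?_) (hall v r hr)
      exact Finset.filter_subset_filter _ (Finset.erase_subset _ _)
  · intro M hM M' hM' h
    simp only [Finset.mem_filter] at hM hM'
    rw [← Finset.insert_erase hM.2, ← Finset.insert_erase hM'.2, h]
  · intro N hN
    rw [mem_F, MP_iff] at hN
    have hNsub := hN.1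
    have hNall := hN.2
    have hnotin : n-1 ∉ N := fun h => by have := Finset.mem_range.mp (hNsub h); omega
    refine ⟨insert (n-1) N, ?_, Finset.erase_insert hnotin⟩
    simp only [Finset.mem_filter, mem_F]
    refine ⟨MP_iff.mpr ⟨?_, ?_⟩, Finset.mem_insert_self _ _⟩
    · intro u hu
      rcases Finset.mem_insert.mp hu with rfl | hu
      · exact Finset.mem_range.mpr (by omega)
      · exact Finset.mem_range.mpr (by have := Finset.mem_range.mp (hNsub hu); omega)
    · intro v r hr
      rw [Finset.filter_insert]
      by_cases hcond : Nat.dist v (n-1) ≤ r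
      · rw [if_pos hcond]
        have hbound : (N.filter fun u => Nat.dist v u ≤ r).card ≤ r - 1 := by
          rcases eq_or_lt_of_le hr with h1 | h2
          · have he : (N.filter fun u => Nat.dist v u ≤ r) = ∅ := by
              rw [Finset.filter_eq_empty_iff]
              intro u hu
              have := Finset.mem_range.mp (hNsub hu)
              simp only [nat_dist_def] at hcond ⊢
              omega
            simp [he]
          · refine le_trans (Finset.card_le_card ?_) (hNall (v-1) (r-1) (by omega))
            intro u hu
            rw [Finset.mem_filter] at hu ⊢
            have := Finset.mem_range.mp (hNsub hu.1)
            refine ⟨hu.1, ?_⟩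
            have h3 := hu.2
            simp only [nat_dist_def] at hcond h3 ⊢
            omega
        calc (insert (n-1) (N.filter fun u => Nat.dist v u ≤ r)).card
            ≤ (N.filter fun u => Nat.dist v u ≤ r).card + 1 := Finset.card_insert_le _ _
          _ ≤ r := by omega
      · rw [if_neg hcond]
        exact hNall v r hr

/-- The number `f(n)` of multipackings of the path `Pₙ` satisfies `f(1) = 2`, `f(2) = 3`,
`f(3) = 4` and the recurrence `f(n) = f(n−1) + f(n−3)` for `n ≥ 4`. -/
theorem pathMultipackingCount_recurrence :
    pathMultipackingCount 1 = 2 ∧ pathMultipackingCount 2 = 3 ∧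
    pathMultipackingCount 3 = 4 ∧
    ∀ n : ℕ, 4 ≤ n →
      pathMultipackingCount n =
        pathMultipackingCount (n - 1) + pathMultipackingCount (n - 3) := by
  refine ⟨?_, ?_, ?_, fun n hn => ?_⟩
  · rw [count_eq]; decide
  · rw [count_eq]; decide
  · rw [count_eq]; decide
  · rw [count_eq, count_eq, count_eq]
    have h := Finset.card_filter_add_card_filter_not
      (s := F n) (p := fun M => (n-1) ∈ M)
    rw [F_notMem (by omega)] at h
    have h2 := F_mem_card hn
    omega
end

section
/- Let g(n) be the number of maximal multipackings of the path P_n. Then g satisfies g(n) = g(n−3) + g(n−4) + g(n−5) for n ≥ 6, with g(1) = 1, g(2) = 2, g(3) = 3. -/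
/-- A multipacking is *maximal* if no proper superset of it is a multipacking. -/
def MaximalMultipacking {V : Type*} (G : SimpleGraph V) (M : Finset V) : Prop :=
  Multipacking G M ∧ ∀ M' : Finset V, Multipacking G M' → M ⊆ M' → M' = M

/-- The number of maximal multipackings of the path `Pₙ` on `n` vertices. -/
noncomputable def pathMaxMultipackingCount (n : ℕ) : ℕ :=
  Nat.card {M : Finset (Fin n) // MaximalMultipacking (SimpleGraph.pathGraph n) M}

open SimpleGraph Finset


lemma pg_walk_exists {n : ℕ} : ∀ (d : ℕ) (i j : Fin n), j.val = i.val + d →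
    ∃ p : (pathGraph n).Walk i j, p.length = d := by
  intro d
  induction d with
  | zero =>
    intro i j h
    have : i = j := Fin.ext (by omega)
    subst this
    exact ⟨Walk.nil, rfl⟩
  | succ d ih =>
    intro i j h
    have hi1 : i.val + 1 < n := by have := j.isLt; omega
    let i' : Fin n := ⟨i.val + 1, hi1⟩
    have hadj : (pathGraph n).Adj i i' := pathGraph_adj.mpr (Or.inl rfl)
    obtain ⟨p, hp⟩ := ih i' j (by simp [i']; omega)
    exact ⟨Walk.cons hadj p, by simp [hp]⟩

lemma pg_walk_lower {n : ℕ} {i j : Fin n} (p : (pathGraph n).Walk i j) :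
    (j.val - i.val) + (i.val - j.val) ≤ p.length := by
  induction p with
  | nil => simp
  | cons h p ih =>
    rw [pathGraph_adj] at h
    rw [Walk.length_cons]
    omega

lemma pg_edist {n : ℕ} (i j : Fin n) :
    (pathGraph n).edist i j = ((j.val - i.val) + (i.val - j.val) : ℕ) := by
  have hle : (pathGraph n).edist i j ≤ ((j.val - i.val) + (i.val - j.val) : ℕ) := by
    rcases le_total i.val j.val with h | h
    · obtain ⟨p, hp⟩ := pg_walk_exists (j.val - i.val) i j (by omega)
      calc (pathGraph n).edist i j ≤ p.length := edist_le p
        _ = _ := by rw [hp]; norm_cast; omega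
    · obtain ⟨p, hp⟩ := pg_walk_exists (i.val - j.val) j i (by omega)
      rw [edist_comm]
      calc (pathGraph n).edist j i ≤ p.length := edist_le p
        _ = _ := by rw [hp]; norm_cast; omega
  refine le_antisymm hle ?_
  have hnt : (pathGraph n).edist i j ≠ ⊤ := fun h => by rw [h] at hle; exact absurd (top_le_iff.mp hle) (ENat.coe_ne_top _)
  obtain ⟨p, hp⟩ := exists_walk_of_edist_ne_top hnt
  calc ((j.val - i.val) + (i.val - j.val) : ℕ∞) ≤ (p.length : ℕ∞) := by
        exact_mod_cast pg_walk_lower p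
    _ = _ := hp

lemma pg_edist_le {n : ℕ} (i j : Fin n) (r : ℕ) :
    (pathGraph n).edist i j ≤ r ↔ i.val ≤ j.val + r ∧ j.val ≤ i.val + r := by
  rw [pg_edist, Nat.cast_le]
  omega

def SpreadF {n : ℕ} (M : Finset (Fin n)) : Prop :=
  ∀ a ∈ M, ∀ b ∈ M, a.val < b.val → a.val + 3 ≤ b.val

def DomF {n : ℕ} (M : Finset (Fin n)) : Prop :=
  ∀ v : Fin n, ∃ m ∈ M, v.val ≤ m.val + 2 ∧ m.val ≤ v.val + 2

lemma mp_iff_spread {n : ℕ} (M : Finset (Fin n)) :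
    Multipacking (SimpleGraph.pathGraph n) M ↔ SpreadF M := by
  constructor
  · intro hmp a ha b hb hab
    by_contra hcon
    push_neg at hcon
    -- pick v near both a and b
    have hb1 : b.val < n := b.isLt
    have hv : a.val + 1 < n ∨ b.val = a.val + 1 := by omega
    obtain ⟨v, hva, hvb⟩ : ∃ v : Fin n, v.val ≤ a.val + 1 ∧ a.val ≤ v.val ∧ b.val ≤ v.val + 1 := by
      rcases Nat.lt_or_ge (a.val + 1) b.val with h | h
      · exact ⟨⟨a.val + 1, by omega⟩, by simp, by simp; omega⟩
      · exact ⟨a, le_of_lt (by omega), le_refl _, by omega⟩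
    have h1 := hmp v 1 le_rfl
    have hfin : ({u : Fin n | u ∈ M ∧ (pathGraph n).edist v u ≤ (1:ℕ)}).Finite :=
      Set.toFinite _
    have h2 : 1 < ({u : Fin n | u ∈ M ∧ (pathGraph n).edist v u ≤ (1:ℕ)}).ncard := by
      rw [Set.one_lt_ncard_iff hfin]
      refine ⟨a, b, ⟨ha, (pg_edist_le v a 1).mpr (by omega)⟩,
        ⟨hb, (pg_edist_le v b 1).mpr (by omega)⟩, fun h => by omega⟩
    have : ((1:ℕ):ℕ∞) = 1 := rfl
    omega
  · intro hs v r hr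
    set T : Set (Fin n) := {u : Fin n | u ∈ M ∧ (pathGraph n).edist v u ≤ (r:ℕ)} with hT
    have hTfin : T.Finite := Set.toFinite _
    have hmem : ∀ u ∈ T, v.val ≤ u.val + r ∧ u.val ≤ v.val + r := by
      intro u hu
      have := hu.2
      rw [pg_edist_le] at this
      omega
    set f : Fin n → ℕ := fun u => (u.val + r - v.val) / 3 with hf
    have hinj : Set.InjOn f T := by
      intro x hx y hy hxy
      by_contra hne
      have hne' : x.val ≠ y.val := fun h => hne (Fin.ext h)
      rcases Nat.lt_or_ge x.val y.val with h | h
      · have h3 := hs x hx.1 y hy.1 h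
        have hvx := hmem x hx
        have : (x.val + r - v.val) + 3 ≤ (y.val + r - v.val) := by omega
        have hd : (x.val + r - v.val + 3)/3 ≤ (y.val + r - v.val)/3 :=
          Nat.div_le_div_right this
        rw [Nat.add_div_right _ (by norm_num)] at hd
        simp only [hf] at hxy
        omega
      · have h' : y.val < x.val := by omega
        have h3 := hs y hy.1 x hx.1 h'
        have hvy := hmem y hy
        have : (y.val + r - v.val) + 3 ≤ (x.val + r - v.val) := by omega
        have hd : (y.val + r - v.val + 3)/3 ≤ (x.val + r - v.val)/3 :=
          Nat.div_le_div_right this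
        rw [Nat.add_div_right _ (by norm_num)] at hd
        simp only [hf] at hxy
        omega
    have himg : f '' T ⊆ Set.Iio r := by
      rintro _ ⟨u, hu, rfl⟩
      have := hmem u hu
      simp only [Set.mem_Iio, hf]
      rw [Nat.div_lt_iff_lt_mul (by norm_num)]
      omega
    calc T.ncard = (f '' T).ncard := (Set.ncard_image_of_injOn hinj).symm
      _ ≤ (Set.Iio r).ncard := Set.ncard_le_ncard himg (Set.finite_Iio r)
      _ = r := by
          have : (Set.Iio r) = ↑(Finset.range r) := by ext x; simp
          rw [this, Set.ncard_coe_finset, Finset.card_range]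

lemma maximal_iff' {n : ℕ} (M : Finset (Fin n)) :
    MaximalMultipacking (SimpleGraph.pathGraph n) M ↔ SpreadF M ∧ DomF M := by
  constructor
  · intro ⟨hmp, hmax⟩
    have hs := (mp_iff_spread M).mp hmp
    refine ⟨hs, ?_⟩
    intro v
    by_contra hcon
    push_neg at hcon
    have hv : v ∉ M := fun h => by have := hcon v h; omega
    have hs' : SpreadF (insert v M) := by
      intro a ha b hb hab
      rw [Finset.mem_insert] at ha hb
      rcases ha with rfl | ha
      · rcases hb with rfl | hb
        · omega
        · have := hcon b hb; omega
      · rcases hb with rfl | hb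
        · have := hcon a ha; omega
        · exact hs a ha b hb hab
    have := hmax (insert v M) ((mp_iff_spread _).mpr hs') (Finset.subset_insert v M)
    exact hv (this ▸ Finset.mem_insert_self v M)
  · intro ⟨hs, hd⟩
    refine ⟨(mp_iff_spread M).mpr hs, ?_⟩
    intro M' hmp' hsub
    have hs' := (mp_iff_spread M').mp hmp'
    refine Finset.Subset.antisymm ?_ hsub
    intro u hu
    obtain ⟨m, hm, hclose⟩ := hd u
    rcases eq_or_ne u m with rfl | hne
    · exact hm
    · have hne' : u.val ≠ m.val := fun h => hne (Fin.ext h)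
      rcases Nat.lt_or_ge u.val m.val with h | h
      · have := hs' u hu m (hsub hm) h; omega
      · have := hs' m (hsub hm) u hu (by omega); omega

def GoodN (n : ℕ) (S : Finset ℕ) : Prop :=
  (∀ a ∈ S, a < n) ∧ (∀ a ∈ S, ∀ b ∈ S, a < b → a + 3 ≤ b) ∧
  (∀ v < n, ∃ m ∈ S, v ≤ m + 2 ∧ m ≤ v + 2)

noncomputable def countGood (n : ℕ) : ℕ := Set.ncard {S : Finset ℕ | GoodN n S}

lemma count_eq_countGood (n : ℕ) : pathMaxMultipackingCount n = countGood n := by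
  have h1 : pathMaxMultipackingCount n
      = ({M : Finset (Fin n) | MaximalMultipacking (SimpleGraph.pathGraph n) M}).ncard :=
    (Nat.card_coe_set_eq _).symm
  set emb : Fin n ↪ ℕ := ⟨Fin.val, Fin.val_injective⟩ with hemb
  have hinj : Function.Injective (fun M : Finset (Fin n) => M.map emb) :=
    Finset.map_injective emb
  have himg : {S : Finset ℕ | GoodN n S}
      = (fun M : Finset (Fin n) => M.map emb) ''
        {M : Finset (Fin n) | MaximalMultipacking (SimpleGraph.pathGraph n) M} := by
    ext S
    simp only [Set.mem_setOf_eq, Set.mem_image]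
    constructor
    · intro hS
      obtain ⟨hsub, hsp, hdom⟩ := hS
      refine ⟨S.attachFin (fun m hm => hsub m hm), ?_, ?_⟩
      · rw [maximal_iff']
        refine ⟨?_, ?_⟩
        · intro a ha b hb hab
          rw [Finset.mem_attachFin] at ha hb
          exact hsp a.val ha b.val hb hab
        · intro v
          obtain ⟨m, hm, h1, h2⟩ := hdom v.val v.isLt
          exact ⟨⟨m, hsub m hm⟩, (Finset.mem_attachFin _).mpr hm, h1, h2⟩
      · ext x
        simp only [Finset.mem_map, Finset.mem_attachFin, hemb, Function.Embedding.coeFn_mk]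
        constructor
        · rintro ⟨a, ha, rfl⟩; exact ha
        · intro hx; exact ⟨⟨x, hsub x hx⟩, hx, rfl⟩
    · rintro ⟨M, hM, rfl⟩
      rw [maximal_iff'] at hM
      obtain ⟨hsp, hdom⟩ := hM
      refine ⟨?_, ?_, ?_⟩
      · intro a ha
        rw [Finset.mem_map] at ha
        obtain ⟨u, _, rfl⟩ := ha
        exact u.isLt
      · intro a ha b hb hab
        rw [Finset.mem_map] at ha hb
        obtain ⟨u, hu, rfl⟩ := ha
        obtain ⟨w, hw, rfl⟩ := hb
        exact hsp u hu w hw hab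
      · intro v hv
        obtain ⟨m, hm, h1, h2⟩ := hdom ⟨v, hv⟩
        exact ⟨m.val, Finset.mem_map_of_mem emb hm, h1, h2⟩
  rw [h1, countGood, himg, Set.ncard_image_of_injective _ hinj]

lemma goodN_finite (n : ℕ) : ({S : Finset ℕ | GoodN n S}).Finite := by
  apply Set.Finite.subset (Finset.finite_toSet (Finset.range n).powerset)
  intro S hS
  simp only [Finset.coe_powerset, Set.mem_preimage, Set.mem_powerset_iff]
  intro a ha
  simpa using hS.1 a ha

lemma countGood_small (n : ℕ) (hn1 : 1 ≤ n) (hn3 : n ≤ 3) : countGood n = n := by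
  have hset : {S : Finset ℕ | GoodN n S} = (fun a => ({a} : Finset ℕ)) '' (Set.Iio n) := by
    ext S
    simp only [Set.mem_setOf_eq, Set.mem_image, Set.mem_Iio]
    constructor
    · intro ⟨hsub, hsp, hdom⟩
      obtain ⟨m, hm, -, -⟩ := hdom 0 (by omega)
      refine ⟨m, hsub m hm, ?_⟩
      symm
      rw [Finset.eq_singleton_iff_unique_mem]
      refine ⟨hm, fun b hb => ?_⟩
      have hbn := hsub b hb
      have hmn := hsub m hm
      rcases lt_trichotomy b m with h | h | h
      · have := hsp b hb m hm h; omega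
      · exact h
      · have := hsp m hm b hb h; omega
    · rintro ⟨a, ha, rfl⟩
      refine ⟨by simpa using ha, ?_, ?_⟩
      · intro x hx y hy hxy
        simp only [Finset.mem_singleton] at hx hy
        omega
      · intro v hv
        exact ⟨a, Finset.mem_singleton_self a, by omega, by omega⟩
  rw [countGood, hset, Set.ncard_image_of_injective _ (fun a b h => by
    simpa using h)]
  have : (Set.Iio n) = ↑(Finset.range n) := by ext x; simp
  rw [this, Set.ncard_coe_finset, Finset.card_range]

lemma good_step (n n' m₀ : ℕ) (h1 : 1 ≤ n') (hm : m₀ = n' + 2) (h2 : n ≤ n' + 5)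
    (h3 : m₀ < n) :
    {S : Finset ℕ | GoodN n S ∧ m₀ ∈ S} = (insert m₀) '' {S' : Finset ℕ | GoodN n' S'} := by
  ext S
  simp only [Set.mem_setOf_eq, Set.mem_image]
  constructor
  · intro ⟨⟨hsub, hsp, hdom⟩, hmem⟩
    refine ⟨S.erase m₀, ⟨?_, ?_, ?_⟩, Finset.insert_erase hmem⟩
    · intro a ha
      rw [Finset.mem_erase] at ha
      obtain ⟨hne, haS⟩ := ha
      have han := hsub a haS
      rcases lt_trichotomy a m₀ with h | h | h
      · have := hsp a haS m₀ hmem h; omega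
      · exact absurd h hne
      · have := hsp m₀ hmem a haS h; omega
    · intro a ha b hb hab
      rw [Finset.mem_erase] at ha hb
      exact hsp a ha.2 b hb.2 hab
    · intro v hv
      obtain ⟨m, hmS, hc1, hc2⟩ := hdom v (by omega)
      refine ⟨m, Finset.mem_erase.mpr ⟨?_, hmS⟩, hc1, hc2⟩
      intro rfl_h
      omega
  · rintro ⟨S', ⟨hsub, hsp, hdom⟩, rfl⟩
    have hS'lt : ∀ a ∈ S', a < n' := hsub
    refine ⟨⟨?_, ?_, ?_⟩, Finset.mem_insert_self m₀ S'⟩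
    · intro a ha
      rw [Finset.mem_insert] at ha
      rcases ha with rfl | ha
      · exact h3
      · have := hS'lt a ha; omega
    · intro a ha b hb hab
      rw [Finset.mem_insert] at ha hb
      rcases ha with rfl | ha
      · rcases hb with rfl | hb
        · omega
        · have := hS'lt b hb; omega
      · rcases hb with rfl | hb
        · have := hS'lt a ha; omega
        · exact hsp a ha b hb hab
    · intro v hv
      rcases Nat.lt_or_ge v n' with h | h
      · obtain ⟨m, hmS, hc1, hc2⟩ := hdom v h
        exact ⟨m, Finset.mem_insert_of_mem hmS, hc1, hc2⟩
      · exact ⟨m₀, Finset.mem_insert_self m₀ S', by omega, by omega⟩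

lemma insert_injOn_good (n' m₀ : ℕ) (hm : n' ≤ m₀) :
    Set.InjOn (insert m₀) {S' : Finset ℕ | GoodN n' S'} := by
  intro S1 hS1 S2 hS2 heq
  have h1 : m₀ ∉ S1 := fun h => by have := hS1.1 m₀ h; omega
  have h2 : m₀ ∉ S2 := fun h => by have := hS2.1 m₀ h; omega
  rw [← Finset.erase_insert h1, heq, Finset.erase_insert h2]

lemma countGood_rec (N : ℕ) :
    countGood (N + 6) = countGood (N + 3) + countGood (N + 2) + countGood (N + 1) := by
  set A0 : Set (Finset ℕ) := {S | GoodN (N + 6) S ∧ (N + 5) ∈ S} with hA0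
  set A1 : Set (Finset ℕ) := {S | GoodN (N + 6) S ∧ (N + 4) ∈ S} with hA1
  set A2 : Set (Finset ℕ) := {S | GoodN (N + 6) S ∧ (N + 3) ∈ S} with hA2
  have hunion : {S : Finset ℕ | GoodN (N + 6) S} = A0 ∪ A1 ∪ A2 := by
    ext S
    simp only [hA0, hA1, hA2, Set.mem_union, Set.mem_setOf_eq]
    constructor
    · intro hS
      obtain ⟨m, hm, hc1, hc2⟩ := hS.2.2 (N + 5) (by omega)
      have := hS.1 m hm
      have : m = N + 5 ∨ m = N + 4 ∨ m = N + 3 := by omega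
      rcases this with rfl | rfl | rfl
      · exact Or.inl (Or.inl ⟨hS, hm⟩)
      · exact Or.inl (Or.inr ⟨hS, hm⟩)
      · exact Or.inr ⟨hS, hm⟩
    · rintro ((⟨h, -⟩ | ⟨h, -⟩) | ⟨h, -⟩) <;> exact h
  have hd01 : Disjoint A0 A1 := by
    rw [Set.disjoint_left]
    rintro S ⟨hg, h5⟩ ⟨-, h4⟩
    have := hg.2.1 (N + 4) h4 (N + 5) h5 (by omega)
    omega
  have hd02 : Disjoint A0 A2 := by
    rw [Set.disjoint_left]
    rintro S ⟨hg, h5⟩ ⟨-, h3⟩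
    have := hg.2.1 (N + 3) h3 (N + 5) h5 (by omega)
    omega
  have hd12 : Disjoint A1 A2 := by
    rw [Set.disjoint_left]
    rintro S ⟨hg, h4⟩ ⟨-, h3⟩
    have := hg.2.1 (N + 3) h3 (N + 4) h4 (by omega)
    omega
  have hfin : ∀ A : Set (Finset ℕ), A ⊆ {S : Finset ℕ | GoodN (N + 6) S} → A.Finite :=
    fun A hA => Set.Finite.subset (goodN_finite (N + 6)) hA
  have hfin0 : A0.Finite := hfin A0 (fun S hS => hS.1)
  have hfin1 : A1.Finite := hfin A1 (fun S hS => hS.1)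
  have hfin2 : A2.Finite := hfin A2 (fun S hS => hS.1)
  have hc0 : A0.ncard = countGood (N + 3) := by
    rw [hA0, good_step (N + 6) (N + 3) (N + 5) (by omega) (by omega) (by omega) (by omega),
      Set.ncard_image_of_injOn (insert_injOn_good (N + 3) (N + 5) (by omega))]
    rfl
  have hc1 : A1.ncard = countGood (N + 2) := by
    rw [hA1, good_step (N + 6) (N + 2) (N + 4) (by omega) (by omega) (by omega) (by omega),
      Set.ncard_image_of_injOn (insert_injOn_good (N + 2) (N + 4) (by omega))]
    rfl
  have hc2 : A2.ncard = countGood (N + 1) := by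
    rw [hA2, good_step (N + 6) (N + 1) (N + 3) (by omega) (by omega) (by omega) (by omega),
      Set.ncard_image_of_injOn (insert_injOn_good (N + 1) (N + 3) (by omega))]
    rfl
  rw [countGood, hunion,
    Set.ncard_union_eq (by rw [Set.disjoint_union_left]; exact ⟨hd02, hd12⟩)
      (hfin0.union hfin1) hfin2,
    Set.ncard_union_eq hd01 hfin0 hfin1, hc0, hc1, hc2]

/-- The number `g(n)` of maximal multipackings of the path `Pₙ` satisfies `g(1) = 1`,
`g(2) = 2`, `g(3) = 3` and the recurrence `g(n) = g(n−3) + g(n−4) + g(n−5)` for `n ≥ 6`. -/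
theorem pathMaxMultipackingCount_recurrence :
    pathMaxMultipackingCount 1 = 1 ∧ pathMaxMultipackingCount 2 = 2 ∧
    pathMaxMultipackingCount 3 = 3 ∧
    ∀ n : ℕ, 6 ≤ n →
      pathMaxMultipackingCount n =
        pathMaxMultipackingCount (n - 3) + pathMaxMultipackingCount (n - 4) +
          pathMaxMultipackingCount (n - 5) := by
  refine ⟨?_, ?_, ?_, ?_⟩
  · rw [count_eq_countGood, countGood_small 1 (by norm_num) (by norm_num)]
  · rw [count_eq_countGood, countGood_small 2 (by norm_num) (by norm_num)]
  · rw [count_eq_countGood, countGood_small 3 (by norm_num) (by norm_num)]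
  · intro n hn
    obtain ⟨N, rfl⟩ : ∃ N, n = N + 6 := ⟨n - 6, by omega⟩
    have e3 : N + 6 - 3 = N + 3 := by omega
    have e4 : N + 6 - 4 = N + 2 := by omega
    have e5 : N + 6 - 5 = N + 1 := by omega
    rw [e3, e4, e5, count_eq_countGood, count_eq_countGood, count_eq_countGood,
      count_eq_countGood]
    exact countGood_rec N
end

section
/- Let f(n) be the maximum number of multipackings over all trees on n vertices. Then f(n) ≤ f(n−1) + f(n−2) for all n ≥ 3; consequently f(n) = O(φ^n) where φ = (1+√5)/2, i.e., f(n) ≤ C·(1.62)^n for some constant C. -/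
/-- The maximum number of multipackings over all trees on `n` vertices. -/
noncomputable def maxTreeMultipackingCount (n : ℕ) : ℕ :=
  sSup {c : ℕ | ∃ T : SimpleGraph (Fin n), T.Connected ∧ T.IsAcyclic ∧
    c = Nat.card {M : Finset (Fin n) // Multipacking T M}}

set_option linter.unusedSectionVars false
set_option maxHeartbeats 1000000

open SimpleGraph

namespace MPaux

variable {α V : Type*}

/-- Lift a walk whose support lies in the range of an injective map to the comap graph. -/
lemma exists_comap_walk {G : SimpleGraph V} {g : α → V} (hg : Function.Injective g) :
    ∀ {u v : V} (p : G.Walk u v) {a b : α} (_ : g a = u) (_ : g b = v)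
      (_ : ∀ x ∈ p.support, x ∈ Set.range g),
    ∃ q : (G.comap g).Walk a b, q.length = p.length := by
  intro u v p
  induction p with
  | nil =>
    intro a b ha hb _
    obtain rfl : a = b := hg (ha.trans hb.symm)
    exact ⟨.nil, rfl⟩
  | @cons u u' v h p ih =>
    intro a b ha hb hs
    obtain ⟨a', ha'⟩ := hs u' (by simp)
    obtain ⟨q, hq⟩ := ih ha' hb (fun x hx => hs x (by simp [hx]))
    have hadj : (G.comap g).Adj a a' := by
      show G.Adj (g a) (g a'); rw [ha, ha']; exact h
    exact ⟨.cons hadj q, by simp [hq]⟩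

/-- The natural hom from a comap graph. -/
def comapHom {G : SimpleGraph V} (g : α → V) : G.comap g →g G :=
  ⟨g, fun h => h⟩

@[simp] lemma comapHom_apply {G : SimpleGraph V} (g : α → V) (a : α) :
    comapHom (G := G) g a = g a := rfl

/-- A vertex `z` whose neighbourhood is contained in `{a, b}`, with `a` not on the path,
cannot lie on a path unless it is an endpoint. -/
lemma not_mem_support {G : SimpleGraph V} {z a b : V}
    (hz : ∀ t, G.Adj z t → t = a ∨ t = b) :
    ∀ {u v : V} (p : G.Walk u v), p.IsPath → u ≠ z → v ≠ z →
      (a ∉ p.support ∨ a = b) → z ∉ p.support := by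
  intro u v p
  induction p with
  | nil => intro _ hu _ _ hmem; simp only [Walk.support_nil, List.mem_singleton] at hmem
           exact hu hmem.symm
  | @cons u u' v h p ih =>
    intro hp hu hv hab
    by_cases hu' : u' = z
    · subst hu'
      exfalso
      -- p : Walk u' v with u' = z, v ≠ z so p is a cons
      cases p with
      | nil => exact hv rfl
      | @cons _ x2 _ h2 p2 =>
        -- u and x2 are neighbours of z
        have h1 : u = a ∨ u = b := hz u h.symm
        have h3 : x2 = a ∨ x2 = b := hz x2 h2
        have hux2 : u = x2 := by
          rcases hab with hna | rfl
          · have hua : u ≠ a := by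
              rintro rfl; exact hna (by simp)
            have hx2a : x2 ≠ a := by
              rintro rfl
              exact hna (by simp [Walk.support_cons])
            rcases h1 with h1 | h1
            · exact absurd h1 hua
            · rcases h3 with h3 | h3
              · exact absurd h3 hx2a
              · rw [h1, h3]
          · rcases h1 with rfl | rfl <;> rcases h3 with rfl | rfl <;> rfl
        -- then u appears twice in the support
        have hnodup := hp.support_nodup
        rw [Walk.support_cons, Walk.support_cons] at hnodup
        have : u ∈ p2.support := hux2 ▸ p2.start_mem_support
        exact (List.nodup_cons.mp hnodup).1 (by simp [this])
    · have : z ∉ p.support := by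
        refine ih hp.of_cons hu' hv ?_
        rcases hab with hna | rfl
        · exact Or.inl (fun hx => hna (by simp [hx]))
        · exact Or.inr rfl
      simp only [Walk.support_cons, List.mem_cons]
      rintro (rfl | hx)
      · exact hu rfl
      · exact this hx


section
variable {G : SimpleGraph V} {g : α → V}

def AvoidHyp (G : SimpleGraph V) (g : α → V) : Prop :=
  ∀ {u v : V} (p : G.Walk u v), p.IsPath → u ∈ Set.range g → v ∈ Set.range g →
    ∀ x ∈ p.support, x ∈ Set.range g

lemma exists_comap_walk' (hg : Function.Injective g) (hav : AvoidHyp G g)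
    (hc : G.Connected) (a b : α) :
    ∃ q : (G.comap g).Walk a b, (q.length : ℕ∞) ≤ G.edist (g a) (g b) := by
  classical
  have hr : G.Reachable (g a) (g b) := hc (g a) (g b)
  obtain ⟨p, hp⟩ := hr.exists_walk_length_eq_edist
  have hsupp : ∀ x ∈ p.bypass.support, x ∈ Set.range g :=
    hav p.bypass p.bypass_isPath ⟨a, rfl⟩ ⟨b, rfl⟩
  obtain ⟨q, hq⟩ := exists_comap_walk hg p.bypass rfl rfl hsupp
  refine ⟨q, ?_⟩
  rw [hq, ← hp]
  exact_mod_cast Nat.cast_le.mpr p.length_bypass_le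

lemma comap_connected (hg : Function.Injective g) (hav : AvoidHyp G g)
    (hc : G.Connected) (hne : Nonempty α) : (G.comap g).Connected := by
  rw [connected_iff]
  refine ⟨fun a b => ?_, hne⟩
  obtain ⟨q, _⟩ := exists_comap_walk' hg hav hc a b
  exact ⟨q⟩

lemma comap_edist (hg : Function.Injective g) (hav : AvoidHyp G g)
    (hc : G.Connected) (a b : α) :
    (G.comap g).edist a b = G.edist (g a) (g b) := by
  refine le_antisymm ?_ ?_
  · obtain ⟨q, hq⟩ := exists_comap_walk' hg hav hc a b
    exact le_trans (edist_le q) hq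
  · have hr : (G.comap g).Reachable a b := (comap_connected hg hav hc ⟨a⟩) a b
    obtain ⟨q, hq⟩ := hr.exists_walk_length_eq_edist
    calc G.edist (g a) (g b) ≤ (q.map (comapHom g)).length := by
          exact_mod_cast edist_le (q.map (comapHom g))
      _ = (q.length : ℕ∞) := by rw [Walk.length_map]
      _ = (G.comap g).edist a b := hq

lemma comap_isAcyclic (hg : Function.Injective g) (ha : G.IsAcyclic) :
    (G.comap g).IsAcyclic := by
  intro v c hcyc
  exact ha (c.map (comapHom g)) (hcyc.map hg)

end
section
variable {α V : Type*} {G : SimpleGraph V} {g : α → V}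

lemma multipacking_comap [DecidableEq α] (hg : Function.Injective g)
    (hed : ∀ a b, (G.comap g).edist a b = G.edist (g a) (g b))
    {M : Finset V} (hM : Multipacking G M) :
    Multipacking (G.comap g) (M.preimage g (hg.injOn)) := by
  intro a r hr
  have hfin : {u : V | u ∈ M ∧ G.edist (g a) u ≤ r}.Finite :=
    M.finite_toSet.subset (fun x hx => hx.1)
  have key : g '' {u : α | u ∈ M.preimage g (hg.injOn) ∧ (G.comap g).edist a u ≤ r}
      ⊆ {u : V | u ∈ M ∧ G.edist (g a) u ≤ r} := by
    rintro _ ⟨u, ⟨hu1, hu2⟩, rfl⟩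
    refine ⟨Finset.mem_preimage.mp hu1, ?_⟩
    rw [← hed a u]; exact hu2
  calc ({u : α | u ∈ M.preimage g (hg.injOn) ∧ (G.comap g).edist a u ≤ r}).ncard
      = (g '' {u : α | u ∈ M.preimage g (hg.injOn) ∧ (G.comap g).edist a u ≤ r}).ncard :=
        (Set.ncard_image_of_injective _ hg).symm
    _ ≤ ({u : V | u ∈ M ∧ G.edist (g a) u ≤ r}).ncard := Set.ncard_le_ncard key hfin
    _ ≤ r := hM (g a) r hr

lemma not_both_mem {M : Finset V} (hM : Multipacking G M) {w z v0 : V}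
    (h1 : G.edist v0 w ≤ 1) (h2 : G.edist v0 z ≤ 1) (hwz : w ≠ z)
    (hw : w ∈ M) (hz : z ∈ M) : False := by
  have hsub : {w, z} ⊆ {u : V | u ∈ M ∧ G.edist v0 u ≤ 1} := by
    rintro x (rfl | rfl)
    exacts [⟨hw, h1⟩, ⟨hz, h2⟩]
  have hfin : {u : V | u ∈ M ∧ G.edist v0 u ≤ 1}.Finite :=
    M.finite_toSet.subset (fun x hx => hx.1)
  have := Set.ncard_le_ncard hsub hfin
  rw [Set.ncard_pair hwz] at this
  exact absurd (le_trans this (hM v0 1 le_rfl)) (by norm_num)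

/-- recover a finset from its preimage when it is contained in the range -/
lemma preimage_recover [DecidableEq V] (hg : Function.Injective g)
    {M : Finset V} (hsub : (M : Set V) ⊆ Set.range g) :
    (M.preimage g hg.injOn).image g = M := by
  classical
  rw [Finset.image_preimage]
  ext x
  simp only [Finset.mem_filter]
  exact ⟨fun h => h.1, fun h => ⟨h, hsub h⟩⟩

end

section structural
variable {V : Type*} [Fintype V] [DecidableEq V] {G : SimpleGraph V}

lemma concat_isPath' {u v z : V} {p : G.Walk u v} (hp : p.IsPath) (h : G.Adj v z)
    (hz : z ∉ p.support) : (p.concat h).IsPath := by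
  rw [← Walk.isPath_reverse_iff, Walk.reverse_concat, Walk.cons_isPath_iff]
  exact ⟨(Walk.isPath_reverse_iff p).mpr hp, by simpa using hz⟩

lemma dist_le_of_mem_support {x s v : V} {p : G.Walk x v} (h : s ∈ p.support) :
    G.dist x s ≤ p.length :=
  le_trans (dist_le (p.takeUntil s h)) (Walk.length_takeUntil_le p h)

lemma adj_dist_ne (hc : G.Connected) (hac : G.IsAcyclic) {x a b : V} (hab : G.Adj a b) :
    G.dist x a ≠ G.dist x b := by
  intro he
  obtain ⟨p, hp, hlen⟩ := hc.exists_path_of_dist x a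
  by_cases hmem : b ∈ p.support
  · have h1 : G.dist x b ≤ (p.takeUntil b hmem).length := dist_le _
    have h3 : (p.takeUntil b hmem).length + (p.dropUntil b hmem).length = p.length := by
      rw [← Walk.length_append, Walk.take_spec]
    have h2 : G.dist b a ≤ (p.dropUntil b hmem).length := dist_le _
    have hba : G.dist b a = 1 := dist_eq_one_iff_adj.mpr hab.symm
    omega
  · have hq := concat_isPath' hp hab hmem
    obtain ⟨r, hr, hrlen⟩ := hc.exists_path_of_dist x b
    have heq := hac.path_unique ⟨p.concat hab, hq⟩ ⟨r, hr⟩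
    have hlen2 : (p.concat hab).length = r.length := by
      rw [Subtype.ext_iff] at heq
      exact congrArg Walk.length heq
    rw [Walk.length_concat] at hlen2
    omega

lemma parent_unique (hc : G.Connected) (hac : G.IsAcyclic) {x a b c : V}
    (hba : G.Adj b a) (hca : G.Adj c a)
    (hb : G.dist x b + 1 = G.dist x a) (hcc : G.dist x c + 1 = G.dist x a) : b = c := by
  obtain ⟨p, hp, hplen⟩ := hc.exists_path_of_dist x b
  obtain ⟨q, hq, hqlen⟩ := hc.exists_path_of_dist x c
  have hap : a ∉ p.support := by
    intro hmem
    have := dist_le_of_mem_support hmem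
    omega
  have haq : a ∉ q.support := by
    intro hmem
    have := dist_le_of_mem_support hmem
    omega
  have hp' := concat_isPath' hp hba hap
  have hq' := concat_isPath' hq hca haq
  have heq := hac.path_unique ⟨p.concat hba, hp'⟩ ⟨q.concat hca, hq'⟩
  rw [Subtype.ext_iff] at heq
  have hsup := congrArg (fun (wk : G.Walk x a) => wk.reverse.support) heq
  simp only [Walk.reverse_concat, Walk.support_cons] at hsup
  rw [Walk.support_eq_cons p.reverse, Walk.support_eq_cons q.reverse] at hsup
  simp only [List.cons.injEq] at hsup
  exact hsup.2.1

lemma reachable_closed {S : Set V} (hS : ∀ a ∈ S, ∀ b, G.Adj a b → b ∈ S) :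
    ∀ {u v : V}, u ∈ S → G.Walk u v → v ∈ S
  | _, _, hu, .nil => hu
  | _, _, hu, .cons h p => reachable_closed hS (hS _ hu _ h) p

lemma exists_leaf_pair (hc : G.Connected) (hac : G.IsAcyclic) (hcard : 3 ≤ Fintype.card V) :
    ∃ w z y b : V, w ≠ z ∧ G.Adj w y ∧ (∀ t, G.Adj w t → t = y) ∧
      G.edist y z ≤ 1 ∧ (∀ t, G.Adj z t → t = w ∨ t = b) := by
  classical
  have hne : Nonempty V := Fintype.card_pos_iff.mp (by omega)
  obtain ⟨x⟩ := hne
  obtain ⟨w, -, hwmax⟩ := Finset.exists_max_image Finset.univ (G.dist x) ⟨x, Finset.mem_univ x⟩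
  have hmax : ∀ v, G.dist x v ≤ G.dist x w := fun v => hwmax v (Finset.mem_univ v)
  have hstep : ∀ a b, G.Adj a b → G.dist x a + 1 = G.dist x b ∨ G.dist x b + 1 = G.dist x a := by
    intro a b hab
    have h1 : G.dist x b ≤ G.dist x a + G.dist a b := hc.dist_triangle
    have h2 : G.dist x a ≤ G.dist x b + G.dist b a := hc.dist_triangle
    rw [dist_eq_one_iff_adj.mpr hab] at h1
    rw [dist_eq_one_iff_adj.mpr hab.symm] at h2
    have h3 := adj_dist_ne hc hac (x := x) hab
    omega
  have hk1 : 1 ≤ G.dist x w := by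
    by_contra h
    have hall : ∀ v : V, v = x := by
      intro v
      have := hmax v
      have h0 : G.dist x v = 0 := by omega
      exact ((hc.dist_eq_zero_iff (u := x) (v := v)).mp h0).symm
    have : Fintype.card V ≤ 1 := Fintype.card_le_one_iff.mpr (fun a b => (hall a).trans (hall b).symm)
    omega
  have hnbr : ∀ v : V, v ≠ x → ∃ t, G.Adj v t := by
    intro v hv
    obtain ⟨p⟩ := hc v x
    cases p with
    | nil => exact absurd rfl hv
    | cons h q => exact ⟨_, h⟩
  have hleaf : ∀ v, G.dist x v = G.dist x w →
      ∃ y, G.Adj v y ∧ (∀ t, G.Adj v t → t = y) := by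
    intro v hv
    have hvx : v ≠ x := by
      rintro rfl
      rw [SimpleGraph.dist_self] at hv
      omega
    obtain ⟨y, hy⟩ := hnbr v hvx
    have hall : ∀ t, G.Adj v t → G.dist x t + 1 = G.dist x v := by
      intro t ht
      rcases hstep v t ht with h | h
      · exfalso; have := hmax t; omega
      · exact h
    exact ⟨y, hy, fun t ht => parent_unique hc hac ht.symm hy.symm (hall t ht) (hall y hy)⟩
  obtain ⟨y, hwy, hwuniq⟩ := hleaf w rfl
  have hyd : G.dist x y + 1 = G.dist x w := by
    rcases hstep w y hwy with h | h
    · exfalso; have := hmax y; omega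
    · exact h
  by_cases hcase : ∃ t, G.Adj y t ∧ t ≠ w ∧ G.dist x t = G.dist x w
  · obtain ⟨z, hyz, hzw, hzk⟩ := hcase
    obtain ⟨y2, hy2, huniq2⟩ := hleaf z hzk
    have hyy2 : y = y2 := huniq2 y hyz.symm
    refine ⟨w, z, y, y, hzw.symm, hwy, hwuniq, le_of_eq (edist_eq_one_iff_adj.mpr hyz), ?_⟩
    intro t ht
    exact Or.inr ((huniq2 t ht).trans hyy2.symm)
  · push_neg at hcase
    have hpar : ∀ t, G.Adj y t → t ≠ w → G.dist x t + 1 = G.dist x y := by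
      intro t ht htw
      rcases hstep y t ht with h | h
      · exfalso; exact hcase t ht htw (by omega)
      · exact h
    by_cases hcase2 : ∃ t, G.Adj y t ∧ t ≠ w
    · obtain ⟨b, hyb, hbw⟩ := hcase2
      refine ⟨w, y, y, b, hwy.ne, hwy, hwuniq, by simp [SimpleGraph.edist_self], ?_⟩
      intro t ht
      by_cases htw : t = w
      · exact Or.inl htw
      · exact Or.inr (parent_unique hc hac ht.symm hyb.symm (hpar t ht htw) (hpar b hyb hbw))
    · push_neg at hcase2
      exfalso
      have hS : ∀ a ∈ ({w, y} : Set V), ∀ b, G.Adj a b → b ∈ ({w, y} : Set V) := by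
        rintro a (rfl | rfl) b hab
        · exact Or.inr (hwuniq b hab)
        · exact Or.inl (hcase2 b hab)
      have huniv : ∀ v : V, v ∈ ({w, y} : Set V) := by
        intro v
        obtain ⟨p⟩ := hc w v
        exact reachable_closed hS (Or.inl rfl) p
      have hsub : (Set.univ : Set V) ⊆ ({w, y} : Set V) := fun v _ => huniv v
      have h1 : (Set.univ : Set V).ncard ≤ ({w, y} : Set V).ncard :=
        Set.ncard_le_ncard hsub (Set.toFinite _)
      rw [Set.ncard_univ, Nat.card_eq_fintype_card] at h1
      have h2 : ({w, y} : Set V).ncard ≤ 2 :=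
        le_trans (Set.ncard_insert_le _ _) (by simp)
      omega

end structural

lemma multipacking_subset {V : Type*} {G : SimpleGraph V} {M M' : Finset V}
    (hsub : M' ⊆ M) (hM : Multipacking G M) : Multipacking G M' := by
  intro v r hr
  refine le_trans (Set.ncard_le_ncard ?_ (M.finite_toSet.subset (fun x hx => hx.1))) (hM v r hr)
  exact fun x hx => ⟨hsub hx.1, hx.2⟩

lemma card_le_max {m : ℕ} (T' : SimpleGraph (Fin m)) (hc' : T'.Connected) (ha' : T'.IsAcyclic) :
    Nat.card {M : Finset (Fin m) // Multipacking T' M} ≤ maxTreeMultipackingCount m := by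
  apply le_csSup
  · refine ⟨2 ^ m, ?_⟩
    rintro c ⟨T'', -, -, rfl⟩
    calc Nat.card {M : Finset (Fin m) // Multipacking T'' M}
        ≤ Nat.card (Finset (Fin m)) :=
          Nat.card_le_card_of_injective Subtype.val Subtype.val_injective
      _ = 2 ^ m := by rw [Nat.card_eq_fintype_card]; simp
  · exact ⟨T', hc', ha', rfl⟩

lemma max_le_pow (m : ℕ) : maxTreeMultipackingCount m ≤ 2 ^ m := by
  unfold maxTreeMultipackingCount
  by_cases h : {c : ℕ | ∃ T : SimpleGraph (Fin m), T.Connected ∧ T.IsAcyclic ∧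
      c = Nat.card {M : Finset (Fin m) // Multipacking T M}}.Nonempty
  · refine csSup_le h ?_
    rintro c ⟨T'', -, -, rfl⟩
    calc Nat.card {M : Finset (Fin m) // Multipacking T'' M}
        ≤ Nat.card (Finset (Fin m)) :=
          Nat.card_le_card_of_injective Subtype.val Subtype.val_injective
      _ = 2 ^ m := by rw [Nat.card_eq_fintype_card]; simp
  · rw [Set.not_nonempty_iff_eq_empty.mp h, csSup_empty]
    exact Nat.zero_le _

lemma key {n : ℕ} (hn : 3 ≤ n) (T : SimpleGraph (Fin n)) (hc : T.Connected)
    (hac : T.IsAcyclic) :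
    Nat.card {M : Finset (Fin n) // Multipacking T M} ≤
      maxTreeMultipackingCount (n - 1) + maxTreeMultipackingCount (n - 2) := by
  classical
  obtain ⟨w, z, y, b, hwz, hwy, hwuniq, hyz, hzuniq⟩ :=
    exists_leaf_pair hc hac (by simpa using hn)
  -- the two injections
  have c1 : Fintype.card {x : Fin n // ¬ (x = w)} = n - 1 := by
    rw [Fintype.card_subtype_compl, Fintype.card_subtype_eq, Fintype.card_fin]
  have c2 : Fintype.card {x : Fin n // ¬ (x ∈ ({w, z} : Finset (Fin n)))} = n - 2 := by
    rw [Fintype.card_subtype_compl, Fintype.card_fin]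
    congr 1
    rw [Fintype.card_coe]
    exact Finset.card_pair hwz
  set e1 := Fintype.equivFinOfCardEq c1 with he1
  set e2 := Fintype.equivFinOfCardEq c2 with he2
  set g1 : Fin (n - 1) → Fin n := fun i => (e1.symm i : Fin n) with hg1def
  set g2 : Fin (n - 2) → Fin n := fun i => (e2.symm i : Fin n) with hg2def
  have hg1 : Function.Injective g1 := Subtype.val_injective.comp e1.symm.injective
  have hg2 : Function.Injective g2 := Subtype.val_injective.comp e2.symm.injective
  have hrange1 : Set.range g1 = {x : Fin n | x ≠ w} := by
    ext x
    constructor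
    · rintro ⟨i, rfl⟩; exact (e1.symm i).2
    · intro hx; exact ⟨e1 ⟨x, hx⟩, by simp [hg1def]⟩
  have hrange2 : Set.range g2 = {x : Fin n | x ≠ w ∧ x ≠ z} := by
    ext x
    constructor
    · rintro ⟨i, rfl⟩
      have := (e2.symm i).2
      simpa using this
    · intro hx
      refine ⟨e2 ⟨x, by simp [hx.1, hx.2]⟩, by simp [hg2def]⟩
  have hwnbrs : ∀ t, T.Adj w t → t = y ∨ t = y := fun t ht => Or.inl (hwuniq t ht)
  have hav1 : AvoidHyp T g1 := by
    intro u v p hp hu hv xx hx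
    rw [hrange1] at hu hv ⊢
    have hwn : w ∉ p.support := not_mem_support hwnbrs p hp hu hv (Or.inr rfl)
    rintro rfl
    exact hwn hx
  have hav2 : AvoidHyp T g2 := by
    intro u v p hp hu hv xx hx
    rw [hrange2] at hu hv ⊢
    have hwn : w ∉ p.support := not_mem_support hwnbrs p hp hu.1 hv.1 (Or.inr rfl)
    have hzn : z ∉ p.support := not_mem_support hzuniq p hp hu.2 hv.2 (Or.inl hwn)
    constructor
    · rintro rfl; exact hwn hx
    · rintro rfl; exact hzn hx
  have hne1 : Nonempty (Fin (n - 1)) := ⟨⟨0, by omega⟩⟩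
  have hne2 : Nonempty (Fin (n - 2)) := ⟨⟨0, by omega⟩⟩
  have hed1 := comap_edist hg1 hav1 hc
  have hed2 := comap_edist hg2 hav2 hc
  -- edist facts for excluding z
  have heyw : T.edist y w ≤ 1 := le_of_eq (edist_eq_one_iff_adj.mpr hwy.symm)
  -- the injection
  set F : {M : Finset (Fin n) // Multipacking T M} →
      ({M : Finset (Fin (n - 1)) // Multipacking (T.comap g1) M} ⊕
       {M : Finset (Fin (n - 2)) // Multipacking (T.comap g2) M}) :=
    fun MM => if hw : w ∈ MM.1
      then Sum.inr ⟨(MM.1.erase w).preimage g2 hg2.injOn,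
        multipacking_comap hg2 hed2 (multipacking_subset (Finset.erase_subset _ _) MM.2)⟩
      else Sum.inl ⟨MM.1.preimage g1 hg1.injOn,
        multipacking_comap hg1 hed1 MM.2⟩ with hF
  have hFinj : Function.Injective F := by
    rintro ⟨M1, h1⟩ ⟨M2, h2⟩ heq
    simp only [hF] at heq
    by_cases hw1 : w ∈ M1 <;> by_cases hw2 : w ∈ M2
    · -- both contain w
      rw [dif_pos hw1, dif_pos hw2] at heq
      simp only [Sum.inr.injEq, Subtype.mk.injEq] at heq
      have hz1 : z ∉ M1 := fun hz1 => not_both_mem h1 heyw hyz hwz hw1 hz1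
      have hz2 : z ∉ M2 := fun hz2 => not_both_mem h2 heyw hyz hwz hw2 hz2
      have hsub1 : ((M1.erase w : Finset (Fin n)) : Set (Fin n)) ⊆ Set.range g2 := by
        rw [hrange2]
        intro x hx
        simp only [Finset.coe_erase, Set.mem_diff, Finset.mem_coe, Set.mem_singleton_iff] at hx
        exact ⟨hx.2, fun hxz => hz1 (hxz ▸ hx.1)⟩
      have hsub2 : ((M2.erase w : Finset (Fin n)) : Set (Fin n)) ⊆ Set.range g2 := by
        rw [hrange2]
        intro x hx
        simp only [Finset.coe_erase, Set.mem_diff, Finset.mem_coe, Set.mem_singleton_iff] at hx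
        exact ⟨hx.2, fun hxz => hz2 (hxz ▸ hx.1)⟩
      have : M1.erase w = M2.erase w := by
        rw [← preimage_recover hg2 hsub1, ← preimage_recover hg2 hsub2, heq]
      have hM : M1 = M2 := by
        rw [← Finset.insert_erase hw1, ← Finset.insert_erase hw2, this]
      exact Subtype.ext hM
    · rw [dif_pos hw1, dif_neg hw2] at heq; exact absurd heq (by simp)
    · rw [dif_neg hw1, dif_pos hw2] at heq; exact absurd heq (by simp)
    · rw [dif_neg hw1, dif_neg hw2] at heq
      simp only [Sum.inl.injEq, Subtype.mk.injEq] at heq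
      have hsub1 : ((M1 : Finset (Fin n)) : Set (Fin n)) ⊆ Set.range g1 := by
        rw [hrange1]; intro x hx; rintro rfl; exact hw1 hx
      have hsub2 : ((M2 : Finset (Fin n)) : Set (Fin n)) ⊆ Set.range g1 := by
        rw [hrange1]; intro x hx; rintro rfl; exact hw2 hx
      have hM : M1 = M2 := by
        rw [← preimage_recover hg1 hsub1, ← preimage_recover hg1 hsub2, heq]
      exact Subtype.ext hM
  calc Nat.card {M : Finset (Fin n) // Multipacking T M}
      ≤ Nat.card ({M : Finset (Fin (n - 1)) // Multipacking (T.comap g1) M} ⊕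
          {M : Finset (Fin (n - 2)) // Multipacking (T.comap g2) M}) :=
        Nat.card_le_card_of_injective F hFinj
    _ = Nat.card {M : Finset (Fin (n - 1)) // Multipacking (T.comap g1) M} +
        Nat.card {M : Finset (Fin (n - 2)) // Multipacking (T.comap g2) M} := Nat.card_sum
    _ ≤ maxTreeMultipackingCount (n - 1) + maxTreeMultipackingCount (n - 2) := by
        gcongr
        · exact card_le_max _ (comap_connected hg1 hav1 hc hne1) (comap_isAcyclic hg1 hac)
        · exact card_le_max _ (comap_connected hg2 hav2 hc hne2) (comap_isAcyclic hg2 hac)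

lemma part1 {n : ℕ} (hn : 3 ≤ n) :
    maxTreeMultipackingCount n ≤
      maxTreeMultipackingCount (n - 1) + maxTreeMultipackingCount (n - 2) := by
  by_cases h : {c : ℕ | ∃ T : SimpleGraph (Fin n), T.Connected ∧ T.IsAcyclic ∧
      c = Nat.card {M : Finset (Fin n) // Multipacking T M}}.Nonempty
  · refine csSup_le h ?_
    rintro c ⟨T, hc, hac, rfl⟩
    exact key hn T hc hac
  · rw [maxTreeMultipackingCount, Set.not_nonempty_iff_eq_empty.mp h, csSup_empty]
    exact Nat.zero_le _

end MPaux

/-- The maximum number `f(n)` of multipackings of a tree on `n` vertices satisfies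
`f(n) ≤ f(n−1) + f(n−2)` for `n ≥ 3`; consequently `f(n) ≤ C · 1.62ⁿ` for some
constant `C`. -/
theorem maxTreeMultipackingCount_fib :
    (∀ n : ℕ, 3 ≤ n →
      maxTreeMultipackingCount n ≤
        maxTreeMultipackingCount (n - 1) + maxTreeMultipackingCount (n - 2)) ∧
    ∃ C : ℝ, ∀ n : ℕ, (maxTreeMultipackingCount n : ℝ) ≤ C * 1.62 ^ n := by
  constructor
  · intro n hn
    exact MPaux.part1 hn
  · refine ⟨2, ?_⟩
    intro n
    induction n using Nat.strong_induction_on with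
    | _ n ih =>
      rcases n with _ | _ | _ | k
      · calc ((maxTreeMultipackingCount 0 : ℕ) : ℝ) ≤ ((2 ^ 0 : ℕ) : ℝ) := by
              exact_mod_cast MPaux.max_le_pow 0
          _ ≤ 2 * 1.62 ^ 0 := by norm_num
      · calc ((maxTreeMultipackingCount 1 : ℕ) : ℝ) ≤ ((2 ^ 1 : ℕ) : ℝ) := by
              exact_mod_cast MPaux.max_le_pow 1
          _ ≤ 2 * 1.62 ^ 1 := by norm_num
      · calc ((maxTreeMultipackingCount 2 : ℕ) : ℝ) ≤ ((2 ^ 2 : ℕ) : ℝ) := by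
              exact_mod_cast MPaux.max_le_pow 2
          _ ≤ 2 * 1.62 ^ 2 := by norm_num
      · have h1 := ih (k + 2) (by omega)
        have h2 := ih (k + 1) (by omega)
        have hr : maxTreeMultipackingCount (k + 3) ≤
            maxTreeMultipackingCount (k + 2) + maxTreeMultipackingCount (k + 1) :=
          MPaux.part1 (n := k + 3) (by omega)
        have hp : (0 : ℝ) ≤ (1.62 : ℝ) ^ (k + 1) := by positivity
        have e1 : (1.62 : ℝ) ^ (k + 2) = 1.62 ^ (k + 1) * 1.62 := pow_succ _ _
        have e2 : (1.62 : ℝ) ^ (k + 3) = 1.62 ^ (k + 1) * 1.62 * 1.62 := by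
          rw [pow_succ, pow_succ]
        calc ((maxTreeMultipackingCount (k + 3) : ℕ) : ℝ)
            ≤ ((maxTreeMultipackingCount (k + 2) + maxTreeMultipackingCount (k + 1) : ℕ) : ℝ) := by
              exact_mod_cast hr
          _ = (maxTreeMultipackingCount (k + 2) : ℝ) +
              (maxTreeMultipackingCount (k + 1) : ℝ) := by push_cast; ring
          _ ≤ 2 * 1.62 ^ (k + 2) + 2 * 1.62 ^ (k + 1) := add_le_add h1 h2
          _ ≤ 2 * 1.62 ^ (k + 3) := by rw [e1, e2]; nlinarith [hp]
end

section
/- In the Hitting-Set-to-Multipacking reduction graph G (set vertices S_1,…,S_m forming a clique, pendant paths u_i^1⋯u_i^{k−1} attached for each element u_i, with u_i^1 adjacent to S_j iff u_i ∉ S_j), the graph G is chordal: every cycle of length at least 4 has a chord. -/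
/-- Vertices of the reduction graph: `inl j` is the set vertex `Sⱼ`, and `inr (i, t)`
is the path vertex `uᵢ^{t+1}` (so `inr (i, 0)` is `uᵢ¹` and `inr (i, k-2)` is `uᵢ^{k-1}`). -/
abbrev RedV (n m k : ℕ) := Fin m ⊕ (Fin n × Fin (k - 1))

/-- The graph of the Hitting-Set-to-Multipacking reduction: the set vertices `Sⱼ` form a
clique, each element `uᵢ` carries a pendant path `uᵢ¹ uᵢ² ⋯ uᵢ^{k−1}`, and `uᵢ¹` is
adjacent to `Sⱼ` iff `uᵢ ∉ Sⱼ`. -/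
def redGraph (n m k : ℕ) (S : Fin m → Finset (Fin n)) : SimpleGraph (RedV n m k) :=
  SimpleGraph.fromRel (fun x y =>
    (∃ j j' : Fin m, x = Sum.inl j ∧ y = Sum.inl j') ∨
    (∃ (i : Fin n) (t t' : Fin (k - 1)), (t' : ℕ) = (t : ℕ) + 1 ∧
      x = Sum.inr (i, t) ∧ y = Sum.inr (i, t')) ∨
    (∃ (i : Fin n) (j : Fin m) (t : Fin (k - 1)), (t : ℕ) = 0 ∧ i ∉ S j ∧
      x = Sum.inl j ∧ y = Sum.inr (i, t)))

/-!
Every vertex of a cycle has two distinct neighbours along it, and when the cycle has length at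
least `4` these two are not joined by an edge of the cycle. A vertex `uᵢ^t` with `t ≥ 2` has
`uᵢ^{t-1}` and `uᵢ^{t+1}` as its only neighbours, so if it lay on a cycle then so would
`uᵢ^{t+1}`, and climbing the pendant path runs off its end. Hence the neighbours along the cycle
of a vertex `uᵢ¹` on it (or of any vertex, if the cycle meets only set vertices) are two distinct
set vertices, and the clique joins them by a chord.
-/

namespace SimpleGraph.Walk

variable {V : Type*} {G : SimpleGraph V} {u w a b : V} {c : G.Walk u u}

lemma IsCycle.exists_toSubgraph_adj_ne (hc : c.IsCycle) (hw : w ∈ c.support) :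
    ∃ a b, a ≠ b ∧ c.toSubgraph.Adj w a ∧ c.toSubgraph.Adj w b := by
  obtain ⟨a, b, hab, hnbr⟩ := Set.ncard_eq_two.mp (hc.ncard_neighborSet_toSubgraph_eq_two hw)
  refine ⟨a, b, hab, ?_, ?_⟩ <;>
    simp [← Subgraph.mem_neighborSet, hnbr]

lemma IsCycle.not_toSubgraph_adj_snd_penultimate (hc : c.IsCycle) (hlen : 4 ≤ c.length) :
    ¬ c.toSubgraph.Adj c.snd c.penultimate := by
  have hinj := hc.getVert_injOn
  have hend := fun i hi => hc.getVert_endpoint_iff (i := i) hi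
  rw [toSubgraph_adj_iff]
  rintro ⟨i, hi, hilen⟩
  rcases Sym2.eq_iff.mp hi with ⟨h1, h2⟩ | ⟨h1, h2⟩
  · have hi0 : i ≠ 0 := by
      rintro rfl
      rw [getVert_zero, eq_comm, hend _ (by omega)] at h1
      omega
    have h1' : i = 1 := hinj ⟨by omega, by omega⟩ ⟨by omega, by omega⟩ h1
    subst h1'
    have := hinj ⟨by omega, by omega⟩ ⟨by omega, by omega⟩ h2
    omega
  · have h2' : i + 1 = 1 := hinj ⟨by omega, by omega⟩ ⟨by omega, by omega⟩ h2
    have h0 : i = 0 := by omega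
    subst h0
    rw [getVert_zero, eq_comm, hend _ (by omega)] at h1
    omega

lemma IsCycle.not_toSubgraph_adj_of_toSubgraph_adj (hc : c.IsCycle)
    (hlen : 4 ≤ c.length) (ha : c.toSubgraph.Adj w a) (hb : c.toSubgraph.Adj w b) (hab : a ≠ b) :
    ¬ c.toSubgraph.Adj a b := by
  classical
  have hw : w ∈ c.support := mem_support_of_adj_toSubgraph ha
  have hc' := hc.rotate hw
  rw [← toSubgraph_rotate c hw] at ha hb ⊢
  have ha' := (Subgraph.mem_neighborSet _ _ _).mpr ha
  have hb' := (Subgraph.mem_neighborSet _ _ _).mpr hb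
  rw [hc'.neighborSet_toSubgraph_endpoint] at ha' hb'
  have := hc'.not_toSubgraph_adj_snd_penultimate (by simpa using hlen)
  rcases ha' with rfl | rfl <;> rcases hb' with rfl | rfl
  exacts [(hab rfl).elim, this, fun h => this h.symm, (hab rfl).elim]

end SimpleGraph.Walk

open SimpleGraph Walk

namespace redGraph

variable {n m k : ℕ} {S : Fin m → Finset (Fin n)}

lemma adj_of_isLeft {a b : RedV n m k} (ha : a.isLeft) (hb : b.isLeft) (hab : a ≠ b) :
    (redGraph n m k S).Adj a b := by
  obtain ⟨j, rfl⟩ := Sum.isLeft_iff.mp ha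
  obtain ⟨j', rfl⟩ := Sum.isLeft_iff.mp hb
  exact (fromRel_adj _ _ _).mpr ⟨hab, .inl (.inl ⟨j, j', rfl, rfl⟩)⟩

lemma adj_inr_cases {i : Fin n} {t : Fin (k - 1)} {w : RedV n m k}
    (h : (redGraph n m k S).Adj (.inr (i, t)) w) :
    (∃ t' : Fin (k - 1), ((t' : ℕ) = t + 1 ∨ (t : ℕ) = t' + 1) ∧ w = .inr (i, t')) ∨
      ((t : ℕ) = 0 ∧ w.isLeft) := by
  obtain ⟨-, h | h⟩ := (fromRel_adj _ _ _).mp h <;>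
    rcases h with ⟨_, _, h, _⟩ | ⟨_, _, _, ht, hx, hy⟩ | ⟨_, _, _, ht, -, hx, hy⟩ <;>
    simp_all

variable {x : RedV n m k} {c : (redGraph n m k S).Walk x x}

lemma exists_inr_succ_mem_support (hc : c.IsCycle) {i : Fin n} {t : Fin (k - 1)}
    (ht : (t : ℕ) ≠ 0) (hmem : .inr (i, t) ∈ c.support) :
    ∃ t' : Fin (k - 1), (t' : ℕ) = t + 1 ∧ .inr (i, t') ∈ c.support := by
  obtain ⟨a, b, hab, ha, hb⟩ := hc.exists_toSubgraph_adj_ne hmem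
  rcases adj_inr_cases ha.adj_sub with ⟨ta, hta, rfl⟩ | ⟨h0, -⟩
  swap; · exact absurd h0 ht
  rcases adj_inr_cases hb.adj_sub with ⟨tb, htb, rfl⟩ | ⟨h0, -⟩
  swap; · exact absurd h0 ht
  by_cases hta' : (ta : ℕ) = t + 1
  · exact ⟨ta, hta', mem_support_of_adj_toSubgraph ha.symm⟩
  by_cases htb' : (tb : ℕ) = t + 1
  · exact ⟨tb, htb', mem_support_of_adj_toSubgraph hb.symm⟩
  exact absurd (congrArg (fun t => Sum.inr (i, t)) (Fin.ext (by omega))) hab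

lemma val_eq_zero_of_inr_mem_support (hc : c.IsCycle) {i : Fin n} {t : Fin (k - 1)}
    (hmem : .inr (i, t) ∈ c.support) : (t : ℕ) = 0 := by
  by_contra ht
  have hclimb : ∀ d : ℕ, ∃ t' : Fin (k - 1), (t' : ℕ) = t + d ∧ .inr (i, t') ∈ c.support := by
    intro d
    induction d with
    | zero => exact ⟨t, rfl, hmem⟩
    | succ d ih =>
      obtain ⟨t', ht', hmem'⟩ := ih
      obtain ⟨t'', ht'', hmem''⟩ := exists_inr_succ_mem_support hc (by omega) hmem'
      exact ⟨t'', by omega, hmem''⟩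
  obtain ⟨t', ht', -⟩ := hclimb k
  omega

lemma exists_mem_support_forall_toSubgraph_adj_isLeft (hc : c.IsCycle) :
    ∃ w ∈ c.support, ∀ a, c.toSubgraph.Adj w a → a.isLeft := by
  by_cases h : ∃ i t, .inr (i, t) ∈ c.support
  · obtain ⟨i, t, hmem⟩ := h
    refine ⟨_, hmem, fun a ha => ?_⟩
    have ht := val_eq_zero_of_inr_mem_support hc hmem
    rcases adj_inr_cases ha.adj_sub with ⟨t', ht' | ht', rfl⟩ | ⟨-, ha⟩
    · have := val_eq_zero_of_inr_mem_support hc (mem_support_of_adj_toSubgraph ha.symm)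
      omega
    · omega
    · exact ha
  · push Not at h
    refine ⟨x, c.start_mem_support, fun a ha => ?_⟩
    rcases a with j | ⟨i, t⟩
    · rfl
    · exact absurd (mem_support_of_adj_toSubgraph ha.symm) (h i t)

end redGraph

/-- The Hitting-Set reduction graph is chordal: every cycle of length at least `4` has a
chord, i.e. an edge of the graph joining two vertices of the cycle that is not an edge of
the cycle. -/
theorem redGraph_chordal (n m k : ℕ) (S : Fin m → Finset (Fin n))
    (x : RedV n m k) (c : (redGraph n m k S).Walk x x)
    (hc : c.IsCycle) (hlen : 4 ≤ c.length) :
    ∃ u v : RedV n m k, u ∈ c.support ∧ v ∈ c.support ∧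
      (redGraph n m k S).Adj u v ∧ s(u, v) ∉ c.edges := by
  obtain ⟨w, hw, hleft⟩ := redGraph.exists_mem_support_forall_toSubgraph_adj_isLeft hc
  obtain ⟨a, b, hab, ha, hb⟩ := hc.exists_toSubgraph_adj_ne hw
  refine ⟨a, b, mem_support_of_adj_toSubgraph ha.symm, mem_support_of_adj_toSubgraph hb.symm,
    redGraph.adj_of_isLeft (hleft a ha) (hleft b hb) hab, ?_⟩
  rw [← adj_toSubgraph_iff_mem_edges]
  exact hc.not_toSubgraph_adj_of_toSubgraph_adj hlen ha hb hab
end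

section
/- Distance property in the reduction graph: in the graph G of the Hitting-Set reduction (clique on F = {S_1,…,S_m}, pendant path u_i^1⋯u_i^{k−1} per element, u_i^1 ~ S_j iff u_i ∉ S_j), for all i ≠ p and all 1 ≤ q ≤ k−1, the distance d(u_p^q, u_i^{k−1}) ≥ k, and for any set-vertex S_t not adjacent to u_i^1, d(S_t, u_i^{k−1}) ≥ k. -/
/-- Along any walk, a function whose value changes by at most one across each edge
changes by at most the length of the walk. -/
lemma walk_level_bound {V : Type*} {G : SimpleGraph V} (f : V → ℕ)
    (hf : ∀ x y, G.Adj x y → f y ≤ f x + 1) :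
    ∀ {a b : V} (w : G.Walk a b), f b ≤ f a + w.length := by
  intro a b w
  induction w with
  | nil => simp
  | cons h p ih =>
    have := hf _ _ h
    simp only [SimpleGraph.Walk.length_cons]
    omega

lemma edist_level_bound {V : Type*} {G : SimpleGraph V} (f : V → ℕ)
    (hf : ∀ x y, G.Adj x y → f y ≤ f x + 1) (a b : V) :
    (f b : ℕ∞) ≤ (f a : ℕ∞) + G.edist a b := by
  rcases eq_or_ne (G.edist a b) ⊤ with h | h
  · simp [h]
  · obtain ⟨w, hw⟩ := SimpleGraph.exists_walk_of_edist_ne_top h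
    calc (f b : ℕ∞) ≤ ((f a + w.length : ℕ) : ℕ∞) := by
          exact_mod_cast walk_level_bound f hf w
      _ = (f a : ℕ∞) + (w.length : ℕ∞) := by push_cast; ring
      _ = (f a : ℕ∞) + G.edist a b := by rw [hw]

/-- Distance properties of the Hitting-Set reduction graph: for `i ≠ p`, every vertex
`u_p^q` is at distance at least `k` from the pendant-path endpoint `uᵢ^{k−1}`, and any
set vertex `Sₜ` not adjacent to `uᵢ¹` is at distance at least `k` from `uᵢ^{k−1}`. -/
theorem redGraph_dist_ge (n m k : ℕ) (S : Fin m → Finset (Fin n)) (hk : 2 ≤ k)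
    (i : Fin n) (tl : Fin (k - 1)) (htl : (tl : ℕ) = k - 2) :
    (∀ (p : Fin n) (q : Fin (k - 1)), p ≠ i →
      (k : ℕ∞) ≤ (redGraph n m k S).edist (Sum.inr (p, q)) (Sum.inr (i, tl))) ∧
    (∀ (t : Fin m) (t0 : Fin (k - 1)), (t0 : ℕ) = 0 →
      ¬ (redGraph n m k S).Adj (Sum.inl t) (Sum.inr (i, t0)) →
      (k : ℕ∞) ≤ (redGraph n m k S).edist (Sum.inl t) (Sum.inr (i, tl))) := by
  classical
  set f : RedV n m k → ℕ := fun x =>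
    match x with
    | Sum.inl j => if i ∈ S j then 0 else 1
    | Sum.inr (p, t) => if p = i then (t : ℕ) + 2 else 0 with hfdef
  have hrel : ∀ x y : RedV n m k,
      ((∃ j j' : Fin m, x = Sum.inl j ∧ y = Sum.inl j') ∨
      (∃ (i' : Fin n) (t t' : Fin (k - 1)), (t' : ℕ) = (t : ℕ) + 1 ∧
        x = Sum.inr (i', t) ∧ y = Sum.inr (i', t')) ∨
      (∃ (i' : Fin n) (j : Fin m) (t : Fin (k - 1)), (t : ℕ) = 0 ∧ i' ∉ S j ∧
        x = Sum.inl j ∧ y = Sum.inr (i', t))) →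
      f y ≤ f x + 1 ∧ f x ≤ f y + 1 := by
    rintro x y (⟨j, j', rfl, rfl⟩ | ⟨i', t, t', ht, rfl, rfl⟩ | ⟨i', j, t, ht, hij, rfl, rfl⟩)
    · simp only [hfdef]
      split <;> split <;> omega
    · simp only [hfdef]
      split <;> omega
    · simp only [hfdef]
      by_cases hii : i' = i
      · subst hii
        simp [hij, ht]
      · simp [hii]
        split <;> omega
  have hf : ∀ x y, (redGraph n m k S).Adj x y → f y ≤ f x + 1 := by
    intro x y hxy
    rw [redGraph, SimpleGraph.fromRel_adj] at hxy
    rcases hxy.2 with h | h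
    · exact (hrel x y h).1
    · exact (hrel y x h).2
  have hftl : f (Sum.inr (i, tl)) = k := by
    show (if i = i then (tl : ℕ) + 2 else 0) = k
    rw [if_pos rfl, htl]
    omega
  constructor
  · intro p q hpi
    have := edist_level_bound f hf (Sum.inr (p, q)) (Sum.inr (i, tl))
    rw [hftl] at this
    have hfq : f (Sum.inr (p, q)) = 0 := by simp [hfdef, hpi]
    rw [hfq] at this
    simpa using this
  · intro t t0 ht0 hadj
    have hmem : i ∈ S t := by
      by_contra hmem
      apply hadj
      rw [redGraph, SimpleGraph.fromRel_adj]
      exact ⟨by simp, Or.inl (Or.inr (Or.inr ⟨i, t, t0, ht0, hmem, rfl, rfl⟩))⟩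
    have := edist_level_bound f hf (Sum.inl t) (Sum.inr (i, tl))
    rw [hftl] at this
    have hft : f (Sum.inl t) = 0 := by simp [hfdef, hmem]
    rw [hft] at this
    simpa using this
end

section
/- In the bipartite variant of the reduction (set vertices S_1,…,S_m all adjacent to a common vertex C, no edges among the S_j, pendant path u_i^1⋯u_i^{k−1} per element u_i, and u_i^1 adjacent to S_j iff u_i ∉ S_j), the constructed graph G is bipartite, with parts B_1 = {S_1,…,S_m} ∪ {u_i^j : j even} and B_2 = {C} ∪ {u_i^j : j odd}. -/
/-- Vertices of the bipartite reduction graph: `inl none` is the vertex `C`,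
`inl (some j)` is the set vertex `Sⱼ`, and `inr (i, t)` is the path vertex `uᵢ^{t+1}`. -/
abbrev BipRedV (n m k : ℕ) := Option (Fin m) ⊕ (Fin n × Fin (k - 1))

/-- The bipartite variant of the reduction graph: the set vertices `Sⱼ` are all adjacent
to a common vertex `C` (and pairwise non-adjacent), each element `uᵢ` carries a pendant
path `uᵢ¹ ⋯ uᵢ^{k−1}`, and `uᵢ¹` is adjacent to `Sⱼ` iff `uᵢ ∉ Sⱼ`. -/
def bipRedGraph (n m k : ℕ) (S : Fin m → Finset (Fin n)) : SimpleGraph (BipRedV n m k) :=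
  SimpleGraph.fromRel (fun x y =>
    (∃ j : Fin m, x = Sum.inl none ∧ y = Sum.inl (some j)) ∨
    (∃ (i : Fin n) (t t' : Fin (k - 1)), (t' : ℕ) = (t : ℕ) + 1 ∧
      x = Sum.inr (i, t) ∧ y = Sum.inr (i, t')) ∨
    (∃ (i : Fin n) (j : Fin m) (t : Fin (k - 1)), (t : ℕ) = 0 ∧ i ∉ S j ∧
      x = Sum.inl (some j) ∧ y = Sum.inr (i, t)))

/-- The bipartite reduction graph is bipartite with parts
`B₁ = {S₁, …, Sₘ} ∪ {uᵢʲ : j even}` and `B₂ = {C} ∪ {uᵢʲ : j odd}` (the vertex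
`inr (i, t)` is `uᵢ^{t+1}`, so its superscript `t + 1` is even iff `t % 2 = 1`). -/
theorem bipRedGraph_bipartite (n m k : ℕ) (S : Fin m → Finset (Fin n)) :
    let B₁ : Set (BipRedV n m k) :=
      {x | (∃ j : Fin m, x = Sum.inl (some j)) ∨
        ∃ (i : Fin n) (t : Fin (k - 1)), x = Sum.inr (i, t) ∧ (t : ℕ) % 2 = 1}
    let B₂ : Set (BipRedV n m k) :=
      {x | x = Sum.inl none ∨
        ∃ (i : Fin n) (t : Fin (k - 1)), x = Sum.inr (i, t) ∧ (t : ℕ) % 2 = 0}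
    B₁ ∪ B₂ = Set.univ ∧ Disjoint B₁ B₂ ∧
      ∀ x y : BipRedV n m k, (bipRedGraph n m k S).Adj x y →
        ((x ∈ B₁ ∧ y ∈ B₂) ∨ (x ∈ B₂ ∧ y ∈ B₁)) := by

  intro B₁ B₂
  refine ⟨?_, ?_, ?_⟩
  · ext x
    simp only [Set.mem_union, Set.mem_univ, iff_true, Set.mem_setOf_eq, B₁, B₂]
    rcases x with (_|j) | ⟨i, t⟩
    · right; left; rfl
    · left; left; exact ⟨j, rfl⟩
    · rcases Nat.mod_two_eq_zero_or_one t with h | h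
      · right; right; exact ⟨i, t, rfl, h⟩
      · left; right; exact ⟨i, t, rfl, h⟩
  · rw [Set.disjoint_left]
    rintro x (⟨j, rfl⟩ | ⟨i, t, rfl, ht⟩) (h | ⟨i', t', he, ht'⟩) <;> simp_all
  · rintro x y ⟨hne, h | h⟩ <;>
      rcases h with ⟨j, rfl, rfl⟩ | ⟨i, t, t', htt, rfl, rfl⟩ | ⟨i, j, t, ht, hi, rfl, rfl⟩
    · exact Or.inr ⟨Or.inl rfl, Or.inl ⟨j, rfl⟩⟩
    · rcases Nat.mod_two_eq_zero_or_one t with h1 | h1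
      · refine Or.inr ⟨Or.inr ⟨i, t, rfl, h1⟩, Or.inr ⟨i, t', rfl, ?_⟩⟩
        omega
      · refine Or.inl ⟨Or.inr ⟨i, t, rfl, h1⟩, Or.inr ⟨i, t', rfl, ?_⟩⟩
        omega
    · exact Or.inl ⟨Or.inl ⟨j, rfl⟩, Or.inr ⟨i, t, rfl, by omega⟩⟩
    · exact Or.inl ⟨Or.inl ⟨j, rfl⟩, Or.inl rfl⟩
    · rcases Nat.mod_two_eq_zero_or_one t with h1 | h1
      · refine Or.inl ⟨Or.inr ⟨i, t', rfl, by omega⟩, Or.inr ⟨i, t, rfl, h1⟩⟩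
      · refine Or.inr ⟨Or.inr ⟨i, t', rfl, by omega⟩, Or.inr ⟨i, t, rfl, h1⟩⟩
    · exact Or.inr ⟨Or.inr ⟨i, t, rfl, by omega⟩, Or.inl ⟨j, rfl⟩⟩
end

section
/- In the claw-free reduction graph (clique on F; pendant paths u_i^1⋯u_i^{k−2}; vertices w_{j,i} for u_i ∉ S_j forming paths S_j–w_{j,i}–u_i^1; w_{j,i} adjacent to w_{q,p} iff j = q or i = p), the graph is claw-free: it contains no induced K_{1,3}. -/
set_option linter.unreachableTactic false
set_option linter.unusedTactic false

abbrev ClawRedV (n m k : ℕ) (S : Fin m → Finset (Fin n)) :=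
  Fin m ⊕ ((Fin n × Fin (k - 2)) ⊕ {p : Fin m × Fin n // p.2 ∉ S p.1})

def clawRedGraph (n m k : ℕ) (S : Fin m → Finset (Fin n)) :
    SimpleGraph (ClawRedV n m k S) :=
  SimpleGraph.fromRel (fun x y =>
    (∃ j j' : Fin m, x = Sum.inl j ∧ y = Sum.inl j') ∨
    (∃ (i : Fin n) (t t' : Fin (k - 2)), (t' : ℕ) = (t : ℕ) + 1 ∧
      x = Sum.inr (Sum.inl (i, t)) ∧ y = Sum.inr (Sum.inl (i, t'))) ∨
    (∃ w : {p : Fin m × Fin n // p.2 ∉ S p.1},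
      x = Sum.inl w.1.1 ∧ y = Sum.inr (Sum.inr w)) ∨
    (∃ (w : {p : Fin m × Fin n // p.2 ∉ S p.1}) (t : Fin (k - 2)), (t : ℕ) = 0 ∧
      x = Sum.inr (Sum.inr w) ∧ y = Sum.inr (Sum.inl (w.1.2, t))) ∨
    (∃ w w' : {p : Fin m × Fin n // p.2 ∉ S p.1},
      (w.1.1 = w'.1.1 ∨ w.1.2 = w'.1.2) ∧
      x = Sum.inr (Sum.inr w) ∧ y = Sum.inr (Sum.inr w')))

section
variable {n m k : ℕ} {S : Fin m → Finset (Fin n)}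

local notation "G" => clawRedGraph n m k S

lemma adj1 {j j' : Fin m} (h : j ≠ j') :
    (clawRedGraph n m k S).Adj (Sum.inl j) (Sum.inl j') := by
  refine ⟨by simpa using h, Or.inl (Or.inl ⟨j, j', rfl, rfl⟩)⟩

lemma adj2 {i : Fin n} {t t' : Fin (k-2)} (h : (t' : ℕ) = (t : ℕ) + 1) :
    (clawRedGraph n m k S).Adj (Sum.inr (Sum.inl (i, t))) (Sum.inr (Sum.inl (i, t'))) := by
  refine ⟨?_, Or.inl (Or.inr (Or.inl ⟨i, t, t', h, rfl, rfl⟩))⟩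
  simp only [ne_eq, Sum.inr.injEq, Sum.inl.injEq, Prod.mk.injEq, true_and]
  intro he; subst he; omega

lemma adj3 (w : {p : Fin m × Fin n // p.2 ∉ S p.1}) :
    (clawRedGraph n m k S).Adj (Sum.inl w.1.1) (Sum.inr (Sum.inr w)) := by
  exact ⟨by simp, Or.inl (Or.inr (Or.inr (Or.inl ⟨w, rfl, rfl⟩)))⟩

lemma adj4 (w : {p : Fin m × Fin n // p.2 ∉ S p.1}) {t : Fin (k-2)} (h : (t : ℕ) = 0) :
    (clawRedGraph n m k S).Adj (Sum.inr (Sum.inr w)) (Sum.inr (Sum.inl (w.1.2, t))) := by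
  exact ⟨by simp, Or.inl (Or.inr (Or.inr (Or.inr (Or.inl ⟨w, t, h, rfl, rfl⟩))))⟩

lemma adj5 {w w' : {p : Fin m × Fin n // p.2 ∉ S p.1}} (hne : w ≠ w')
    (h : w.1.1 = w'.1.1 ∨ w.1.2 = w'.1.2) :
    (clawRedGraph n m k S).Adj (Sum.inr (Sum.inr w)) (Sum.inr (Sum.inr w')) := by
  exact ⟨by simpa using hne, Or.inl (Or.inr (Or.inr (Or.inr (Or.inr ⟨w, w', h, rfl, rfl⟩))))⟩

lemma nb1 {j : Fin m} {v : ClawRedV n m k S}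
    (h : (clawRedGraph n m k S).Adj (Sum.inl j) v) :
    (∃ j' : Fin m, j' ≠ j ∧ v = Sum.inl j') ∨
    (∃ w : {p : Fin m × Fin n // p.2 ∉ S p.1}, w.1.1 = j ∧ v = Sum.inr (Sum.inr w)) := by
  rw [clawRedGraph, SimpleGraph.fromRel_adj] at h
  obtain ⟨hne, h | h⟩ := h <;>
    rcases h with ⟨a, b, h1, h2⟩ | ⟨a, b, c, h0, h1, h2⟩ | ⟨a, h1, h2⟩ |
      ⟨a, b, h0, h1, h2⟩ | ⟨a, b, h0, h1, h2⟩ <;>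
    simp_all <;> tauto

end

section
variable {n m k : ℕ} {S : Fin m → Finset (Fin n)}

lemma nb2 {i : Fin n} {t : Fin (k-2)} {v : ClawRedV n m k S}
    (h : (clawRedGraph n m k S).Adj (Sum.inr (Sum.inl (i, t))) v) :
    (∃ t' : Fin (k-2), (t' : ℕ) = (t : ℕ) + 1 ∧ v = Sum.inr (Sum.inl (i, t'))) ∨
    ((∃ t' : Fin (k-2), (t : ℕ) = (t' : ℕ) + 1 ∧ v = Sum.inr (Sum.inl (i, t'))) ∨
     (∃ w : {p : Fin m × Fin n // p.2 ∉ S p.1}, (t : ℕ) = 0 ∧ w.1.2 = i ∧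
        v = Sum.inr (Sum.inr w))) := by
  rw [clawRedGraph, SimpleGraph.fromRel_adj] at h
  obtain ⟨hne, h | h⟩ := h <;>
    rcases h with ⟨a, b, h1, h2⟩ | ⟨a, b, c, h0, h1, h2⟩ | ⟨a, h1, h2⟩ |
      ⟨a, b, h0, h1, h2⟩ | ⟨a, b, h0, h1, h2⟩ <;>
    simp_all <;> tauto

lemma nb3 {w : {p : Fin m × Fin n // p.2 ∉ S p.1}} {v : ClawRedV n m k S}
    (h : (clawRedGraph n m k S).Adj (Sum.inr (Sum.inr w)) v) :
    ((v = Sum.inl w.1.1) ∨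
     (∃ w' : {p : Fin m × Fin n // p.2 ∉ S p.1}, w' ≠ w ∧ w'.1.1 = w.1.1 ∧
        v = Sum.inr (Sum.inr w'))) ∨
    ((∃ t : Fin (k-2), (t : ℕ) = 0 ∧ v = Sum.inr (Sum.inl (w.1.2, t))) ∨
     (∃ w' : {p : Fin m × Fin n // p.2 ∉ S p.1}, w' ≠ w ∧ w'.1.2 = w.1.2 ∧
        v = Sum.inr (Sum.inr w'))) := by
  rw [clawRedGraph, SimpleGraph.fromRel_adj] at h
  obtain ⟨hne, h | h⟩ := h <;>
    rcases h with ⟨a, b, h1, h2⟩ | ⟨a, b, c, h0, h1, h2⟩ | ⟨a, h1, h2⟩ |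
      ⟨a, b, h0, h1, h2⟩ | ⟨a, b, h0, h1, h2⟩ <;>
    simp_all <;> tauto

lemma pigeon {V : Type*} (G : SimpleGraph V) {A B : V → Prop} {x y z : V}
    (hA : ∀ u v, A u → A v → u ≠ v → G.Adj u v)
    (hB : ∀ u v, B u → B v → u ≠ v → G.Adj u v)
    (hx : A x ∨ B x) (hy : A y ∨ B y) (hz : A z ∨ B z)
    (hxy : x ≠ y) (hxz : x ≠ z) (hyz : y ≠ z)
    (nxy : ¬ G.Adj x y) (nxz : ¬ G.Adj x z) (nyz : ¬ G.Adj y z) : False := by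
  rcases hx with hx | hx <;> rcases hy with hy | hy <;> rcases hz with hz | hz
  · exact nxy (hA _ _ hx hy hxy)
  · exact nxy (hA _ _ hx hy hxy)
  · exact nxz (hA _ _ hx hz hxz)
  · exact nyz (hB _ _ hy hz hyz)
  · exact nyz (hA _ _ hy hz hyz)
  · exact nxz (hB _ _ hx hz hxz)
  · exact nxy (hB _ _ hx hy hxy)
  · exact nxy (hB _ _ hx hy hxy)

end

/-- The claw-free reduction graph contains no induced claw `K_{1,3}`. -/
theorem clawRedGraph_clawFree (n m k : ℕ) (S : Fin m → Finset (Fin n)) :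
    ¬ ∃ c x y z : ClawRedV n m k S, x ≠ y ∧ x ≠ z ∧ y ≠ z ∧
      (clawRedGraph n m k S).Adj c x ∧ (clawRedGraph n m k S).Adj c y ∧
      (clawRedGraph n m k S).Adj c z ∧
      ¬ (clawRedGraph n m k S).Adj x y ∧ ¬ (clawRedGraph n m k S).Adj x z ∧
      ¬ (clawRedGraph n m k S).Adj y z := by
  rintro ⟨c, x, y, z, hxy, hxz, hyz, hcx, hcy, hcz, nxy, nxz, nyz⟩
  obtain j | ⟨i, t⟩ | w := c
  · refine pigeon (clawRedGraph n m k S)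
      (A := fun v => ∃ j' : Fin m, j' ≠ j ∧ v = Sum.inl j')
      (B := fun v => ∃ w : {p : Fin m × Fin n // p.2 ∉ S p.1}, w.1.1 = j ∧
        v = Sum.inr (Sum.inr w))
      ?_ ?_ (nb1 hcx) (nb1 hcy) (nb1 hcz) hxy hxz hyz nxy nxz nyz
    · rintro u v ⟨j1, h1, rfl⟩ ⟨j2, h2, rfl⟩ hne
      exact adj1 (by simpa using hne)
    · rintro u v ⟨w1, h1, rfl⟩ ⟨w2, h2, rfl⟩ hne
      exact adj5 (by simpa using hne) (Or.inl (h1.trans h2.symm))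
  · refine pigeon (clawRedGraph n m k S)
      (A := fun v => ∃ t' : Fin (k-2), (t' : ℕ) = (t : ℕ) + 1 ∧ v = Sum.inr (Sum.inl (i, t')))
      (B := fun v => (∃ t' : Fin (k-2), (t : ℕ) = (t' : ℕ) + 1 ∧ v = Sum.inr (Sum.inl (i, t'))) ∨
        (∃ w : {p : Fin m × Fin n // p.2 ∉ S p.1}, (t : ℕ) = 0 ∧ w.1.2 = i ∧
          v = Sum.inr (Sum.inr w)))
      ?_ ?_ (nb2 hcx) (nb2 hcy) (nb2 hcz) hxy hxz hyz nxy nxz nyz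
    · rintro u v ⟨t1, h1, rfl⟩ ⟨t2, h2, rfl⟩ hne
      exact absurd (by simp [Fin.ext_iff]; omega) hne
    · rintro u v (⟨t1, h1, rfl⟩ | ⟨w1, h1, h1', rfl⟩) (⟨t2, h2, rfl⟩ | ⟨w2, h2, h2', rfl⟩) hne
      · exact absurd (by simp [Fin.ext_iff]; omega) hne
      · omega
      · omega
      · exact adj5 (by simpa using hne) (Or.inr (h1'.trans h2'.symm))
  · refine pigeon (clawRedGraph n m k S)
      (A := fun v => (v = Sum.inl w.1.1) ∨
        (∃ w' : {p : Fin m × Fin n // p.2 ∉ S p.1}, w' ≠ w ∧ w'.1.1 = w.1.1 ∧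
          v = Sum.inr (Sum.inr w')))
      (B := fun v => (∃ t : Fin (k-2), (t : ℕ) = 0 ∧ v = Sum.inr (Sum.inl (w.1.2, t))) ∨
        (∃ w' : {p : Fin m × Fin n // p.2 ∉ S p.1}, w' ≠ w ∧ w'.1.2 = w.1.2 ∧
          v = Sum.inr (Sum.inr w')))
      ?_ ?_ (nb3 hcx) (nb3 hcy) (nb3 hcz) hxy hxz hyz nxy nxz nyz
    · rintro u v (rfl | ⟨w1, h1, h1', rfl⟩) (rfl | ⟨w2, h2, h2', rfl⟩) hne
      · exact absurd rfl hne
      · exact h2' ▸ adj3 w2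
      · exact ((h1' ▸ adj3 w1).symm)
      · exact adj5 (by simpa using fun e => hne (congrArg _ e)) (Or.inl (h1'.trans h2'.symm))
    · rintro u v (⟨t1, h1, rfl⟩ | ⟨w1, h1, h1', rfl⟩) (⟨t2, h2, rfl⟩ | ⟨w2, h2, h2', rfl⟩) hne
      · exact absurd (by simp [Fin.ext_iff]; omega) hne
      · exact (h2' ▸ adj4 w2 h1).symm
      · exact h1' ▸ adj4 w1 h2
      · exact adj5 (by simpa using fun e => hne (congrArg _ e)) (Or.inr (h1'.trans h2'.symm))
end
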